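/- arXiv:2403.17877 — 11 statements merged into one kernel-verified Lean document; each statement's English description precedes it below -/
import Mathlib

section
/- Let G be a triangle-free graph and S a subset of its vertices. If three vertices u, v, w in S induce a path P3 in G (with v the middle vertex), then each of u, v, w has a closed neighborhood whose intersection with S is distinct from the intersection of the closed neighborhood of every other vertex of G with S. -/
open SimpleGraph

/-- The closed neighborhood of a vertex. -/
def cnbr {V : Type*} (G : SimpleGraph V) (v : V) : Set V := insert v (G.neighborSet v)

/-- `C` is an identifying code of `G`: every vertex is dominated by `C` and the
closed-neighborhood traces on `C` are pairwise distinct. -/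
def IsIdCode {V : Type*} (G : SimpleGraph V) (C : Set V) : Prop :=
  (∀ v, (cnbr G v ∩ C).Nonempty) ∧
  ∀ u v : V, cnbr G u ∩ C = cnbr G v ∩ C → u = v

/-- The minimum size of an identifying code of `G`. -/
noncomputable def gammaID {V : Type*} (G : SimpleGraph V) : ℕ :=
  sInf {n | ∃ C : Set V, IsIdCode G C ∧ C.ncard = n}

/-! In a triangle-free graph, a vertex `y` whose trace `N[y] ∩ S` equals that of a vertex
`a ∈ S` must be adjacent to `a`, hence cannot also be adjacent to a neighbour `b ∈ S` of `a`,
so it must be `b` itself. For the centre of the path this forces `y` to be both endpoints;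
for an endpoint it forces `y` to be the centre, whose trace contains the other endpoint. -/

section

variable {V : Type*} {G : SimpleGraph V} {S : Set V} {a b c y : V}

theorem mem_cnbr : a ∈ cnbr G b ↔ a = b ∨ G.Adj b a := Iff.rfl

theorem self_mem_cnbr : a ∈ cnbr G a := Or.inl rfl

theorem mem_cnbr_of_adj (h : G.Adj b a) : a ∈ cnbr G b := Or.inr h

theorem mem_cnbr_of_cnbr_inter_eq (h : cnbr G a ∩ S = cnbr G b ∩ S) (hc : c ∈ S)
    (hca : c ∈ cnbr G a) : c ∈ cnbr G b :=
  (h ▸ ⟨hca, hc⟩ : c ∈ cnbr G b ∩ S).1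

theorem eq_of_cnbr_inter_eq_of_adj (hG : G.CliqueFree 3) (ha : a ∈ S) (hb : b ∈ S)
    (hab : G.Adj a b) (hy : y ≠ a) (h : cnbr G a ∩ S = cnbr G y ∩ S) : y = b := by
  classical
  obtain rfl | hya := mem_cnbr.1 (mem_cnbr_of_cnbr_inter_eq h ha self_mem_cnbr)
  · exact absurd rfl hy
  obtain rfl | hyb := mem_cnbr.1 (mem_cnbr_of_cnbr_inter_eq h hb (mem_cnbr_of_adj hab))
  · rfl
  · exact (hG {y, a, b} (is3Clique_triple_iff.2 ⟨hya, hyb, hab⟩)).elim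

theorem cnbr_inter_ne_of_induced_path_center (hG : G.CliqueFree 3) (ha : a ∈ S) (hb : b ∈ S)
    (hc : c ∈ S) (hba : G.Adj b a) (hbc : G.Adj b c) (hac : a ≠ c) (hy : y ≠ b) :
    cnbr G b ∩ S ≠ cnbr G y ∩ S := fun h =>
  hac ((eq_of_cnbr_inter_eq_of_adj hG hb ha hba hy h).symm.trans
    (eq_of_cnbr_inter_eq_of_adj hG hb hc hbc hy h))

theorem cnbr_inter_ne_of_induced_path_end (hG : G.CliqueFree 3) (ha : a ∈ S) (hb : b ∈ S)
    (hc : c ∈ S) (hab : G.Adj a b) (hbc : G.Adj b c) (hac : ¬G.Adj a c) (hne : a ≠ c)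
    (hy : y ≠ a) : cnbr G a ∩ S ≠ cnbr G y ∩ S := by
  intro h
  obtain rfl := eq_of_cnbr_inter_eq_of_adj hG ha hb hab hy h
  obtain rfl | hac' := mem_cnbr.1 (mem_cnbr_of_cnbr_inter_eq h.symm hc (mem_cnbr_of_adj hbc))
  exacts [hne rfl, hac hac']

end

theorem stmt_0 {V : Type*} (G : SimpleGraph V) (hG : G.CliqueFree 3) (S : Set V)
    (u v w : V) (hu : u ∈ S) (hv : v ∈ S) (hw : w ∈ S)
    (huv : G.Adj u v) (hvw : G.Adj v w) (huw : ¬ G.Adj u w) (hne : u ≠ w) :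
    ∀ x ∈ ({u, v, w} : Set V), ∀ y : V, y ≠ x → cnbr G x ∩ S ≠ cnbr G y ∩ S := by
  rintro x (rfl | rfl | rfl) y hy
  · exact cnbr_inter_ne_of_induced_path_end hG hu hv hw huv hvw huw hne hy
  · exact cnbr_inter_ne_of_induced_path_center hG hu hv hw huv.symm hvw hne hy
  · exact cnbr_inter_ne_of_induced_path_end hG hw hv hu hvw.symm huv.symm
      (fun h => huw h.symm) hne.symm hy
end

section
/- If t vertices of a graph G all have the same open neighborhood and t >= 2, then every identifying code of G contains at least t - 1 of these vertices. -/
open SimpleGraph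

/-! Twins outside a code have the same trace on it, since the trace of a vertex
outside `C` is that of its open neighborhood; so at most one twin can be missing
from an identifying code. -/

theorem cnbr_inter_eq_neighborSet_inter {V : Type*} (G : SimpleGraph V) {C : Set V} {w : V}
    (hw : w ∉ C) : cnbr G w ∩ C = G.neighborSet w ∩ C := by
  rw [cnbr, Set.insert_inter_of_notMem hw]

theorem IsIdCode.subsingleton_diff_of_neighborSet_eq {V : Type*} {G : SimpleGraph V}
    {C S : Set V} (hC : IsIdCode G C)
    (htwins : ∀ u ∈ S, ∀ v ∈ S, G.neighborSet u = G.neighborSet v) :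
    (S \ C).Subsingleton := by
  rintro u ⟨huS, huC⟩ v ⟨hvS, hvC⟩
  apply hC.2
  rw [cnbr_inter_eq_neighborSet_inter G huC, cnbr_inter_eq_neighborSet_inter G hvC,
    htwins u huS v hvS]

theorem Set.ncard_sub_one_le_ncard_inter {α : Type*} {S C : Set α} (hS : S.Finite)
    (hdiff : (S \ C).Subsingleton) : S.ncard - 1 ≤ (S ∩ C).ncard := by
  have hsplit := Set.ncard_inter_add_ncard_sdiff_eq_ncard S C hS
  have hle : (S \ C).ncard ≤ 1 := (Set.ncard_le_one_iff hS.sdiff).2 (hdiff · ·)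
  omega

theorem stmt_2_general {V : Type*} (G : SimpleGraph V) (T : Finset V) (t : ℕ)
    (hcard : T.card = t)
    (htwins : ∀ u ∈ T, ∀ v ∈ T, G.neighborSet u = G.neighborSet v)
    (C : Set V) (hC : IsIdCode G C) :
    t - 1 ≤ ((T : Set V) ∩ C).ncard := by
  rw [← hcard, ← Set.ncard_coe_finset]
  exact Set.ncard_sub_one_le_ncard_inter T.finite_toSet
    (hC.subsingleton_diff_of_neighborSet_eq htwins)

theorem stmt_2 {V : Type*} (G : SimpleGraph V) (T : Finset V) (t : ℕ)
    (hcard : T.card = t) (ht : 2 ≤ t)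
    (htwins : ∀ u ∈ T, ∀ v ∈ T, G.neighborSet u = G.neighborSet v)
    (C : Set V) (hC : IsIdCode G C) :
    t - 1 ≤ ((T : Set V) ∩ C).ncard :=
  stmt_2_general G T t hcard htwins C hC
end

section
/- Let G be a graph with vertex subsets X and Y such that for every pair of distinct vertices u, v in X there exists a vertex of Y in exactly one of N[u], N[v]. Then there exists a subset C of Y with |C| <= |X| - 1 that also separates every pair of distinct vertices of X (i.e., for all distinct u, v in X, N[u] ∩ C ≠ N[v] ∩ C). -/
open SimpleGraph

/-
The greedy argument: add the points of `X` one at a time. A new point `a` either already has a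
trace on the current code different from all others, or shares it with exactly one earlier point
`b`; one element of `Y` telling `a` and `b` apart then restores separation. So each point after
the first costs at most one element of `Y`.
-/

namespace Set

variable {α β : Type*} {f : α → Set β} {X : Set α} {C C' Y : Set β}

theorem inter_eq_inter_of_subset {s t : Set β} (h : s ∩ C' = t ∩ C') (hCC' : C ⊆ C') :
    s ∩ C = t ∩ C := by
  simpa only [inter_assoc, inter_eq_right.mpr hCC'] using congrArg (· ∩ C) h

theorem InjOn.inter_mono (hC : X.InjOn (f · ∩ C)) (hCC' : C ⊆ C') :
    X.InjOn (f · ∩ C') := fun _ hu _ hv huv ↦ hC hu hv (inter_eq_inter_of_subset huv hCC')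

theorem exists_mem_not_iff_of_inter_ne {s t : Set β} (h : s ∩ Y ≠ t ∩ Y) :
    ∃ y ∈ Y, ¬(y ∈ s ↔ y ∈ t) := by
  contrapose! h
  ext y
  by_cases hy : y ∈ Y <;> simp [hy, h]

theorem InjOn.inter_insert {a b : α} {y : β} (hC : X.InjOn (f · ∩ C)) (ha : a ∉ X) (hb : b ∈ X)
    (hba : f b ∩ C = f a ∩ C) (hy : ¬(y ∈ f a ↔ y ∈ f b)) :
    (insert a X).InjOn (f · ∩ insert y C) := by
  refine (injOn_insert ha).mpr ⟨hC.inter_mono (subset_insert y C), ?_⟩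
  rintro ⟨x, hx, hxa⟩
  obtain rfl : x = b :=
    hC hx hb ((inter_eq_inter_of_subset hxa (subset_insert y C)).trans hba.symm)
  have := congrArg (y ∈ ·) hxa
  simp only [mem_inter_iff, mem_insert_iff, true_or, and_true, eq_iff_iff] at this
  exact hy this.symm

theorem Finite.exists_injOn_inter_ncard_le (hX : X.Finite) (hY : X.InjOn (f · ∩ Y)) :
    ∃ C ⊆ Y, C.ncard ≤ X.ncard - 1 ∧ X.InjOn (f · ∩ C) := by
  induction X, hX using Finite.induction_on with
  | empty => exact ⟨∅, empty_subset Y, by simp, injOn_empty _⟩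
  | @insert a X ha hX ih =>
    obtain ⟨C, hCY, hCcard, hC⟩ := ih (hY.mono (subset_insert a X))
    rw [ncard_insert_of_notMem ha hX, Nat.add_sub_cancel]
    by_cases hnew : (insert a X).InjOn (f · ∩ C)
    · exact ⟨C, hCY, hCcard.trans (Nat.sub_le _ _), hnew⟩
    obtain ⟨b, hb, hba⟩ : ∃ b ∈ X, f b ∩ C = f a ∩ C := by
      simpa [injOn_insert ha, hC] using hnew
    have hne : b ≠ a := fun h ↦ ha (h ▸ hb)
    obtain ⟨y, hyY, hy⟩ := exists_mem_not_iff_of_inter_ne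
      (hY.ne (mem_insert a X) (mem_insert_of_mem a hb) hne.symm)
    have hXpos : 0 < X.ncard := (ncard_pos hX).mpr ⟨b, hb⟩
    exact ⟨insert y C, insert_subset hyY hCY, (ncard_insert_le y C).trans (by omega),
      hC.inter_insert ha hb hba hy⟩

end Set

theorem stmt_4_general {V : Type*} (G : SimpleGraph V) (X Y : Set V)
    (hXfin : X.Finite)
    (hsep : ∀ u ∈ X, ∀ v ∈ X, u ≠ v → cnbr G u ∩ Y ≠ cnbr G v ∩ Y) :
    ∃ C ⊆ Y, C.ncard ≤ X.ncard - 1 ∧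
      ∀ u ∈ X, ∀ v ∈ X, u ≠ v → cnbr G u ∩ C ≠ cnbr G v ∩ C := by
  obtain ⟨C, hCY, hCcard, hC⟩ := hXfin.exists_injOn_inter_ncard_le (f := cnbr G)
    fun u hu v hv huv ↦ by_contra fun hne ↦ hsep u hu v hv hne huv
  exact ⟨C, hCY, hCcard, fun u hu v hv hne huv ↦ hne (hC hu hv huv)⟩

theorem stmt_4 {V : Type*} (G : SimpleGraph V) (X Y : Set V)
    (hXfin : X.Finite) (hXne : X.Nonempty)
    (hsep : ∀ u ∈ X, ∀ v ∈ X, u ≠ v → cnbr G u ∩ Y ≠ cnbr G v ∩ Y) :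
    ∃ C ⊆ Y, C.ncard ≤ X.ncard - 1 ∧
      ∀ u ∈ X, ∀ v ∈ X, u ≠ v → cnbr G u ∩ C ≠ cnbr G v ∩ C :=
  stmt_4_general G X Y hXfin hsep
end

section
/- Let G be a graph with vertex subsets X and Y such that Y separates all pairs of distinct vertices of X (for distinct u, v in X, N[u] ∩ Y ≠ N[v] ∩ Y) and Y dominates X (every vertex of X has a neighbor in Y or belongs to Y). Then there exists a subset C of Y of size at most |X| such that C separates all pairs of distinct vertices of X and C dominates X. -/
open SimpleGraph

open Set

section Traces

variable {α β : Type*} (N : α → Set β)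

lemma inter_eq_inter_of_subset {A B S T : Set β} (hST : S ⊆ T) (h : A ∩ T = B ∩ T) :
    A ∩ S = B ∩ S := by
  rw [← inter_eq_right.2 hST, ← inter_assoc, h, inter_assoc]

lemma injOn_inter_of_subset {X : Set α} {S T : Set β} (hST : S ⊆ T)
    (h : InjOn (N · ∩ S) X) : InjOn (N · ∩ T) X :=
  fun _ ha _ hb hab => h ha hb (inter_eq_inter_of_subset hST hab)

lemma injOn_inter_insert_union {X : Set α} {S₁ S₂ : Set β} (y : β)
    (h₁ : InjOn (N · ∩ S₁) (X ∩ {x | y ∈ N x}))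
    (h₂ : InjOn (N · ∩ S₂) (X \ {x | y ∈ N x})) :
    InjOn (N · ∩ insert y (S₁ ∪ S₂)) X := by
  intro a ha b hb hab
  have hy : y ∈ N a ↔ y ∈ N b := by simpa using congrArg (y ∈ ·) hab
  by_cases hya : y ∈ N a
  · exact h₁ ⟨ha, hya⟩ ⟨hb, hy.1 hya⟩
      (inter_eq_inter_of_subset (subset_union_left.trans (subset_insert _ _)) hab)
  · exact h₂ ⟨ha, hya⟩ ⟨hb, mt hy.2 hya⟩
      (inter_eq_inter_of_subset (subset_union_right.trans (subset_insert _ _)) hab)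

/-- An element of `Y` telling two of the sets apart splits `X` into two nonempty parts, handled
recursively; as each split costs one element, `|X| - 1` elements suffice. -/
lemma exists_subset_injOn_inter_ncard_lt {X : Set α} {Y : Set β} (hX : X.Finite)
    (hXne : X.Nonempty) (hY : InjOn (N · ∩ Y) X) :
    ∃ S ⊆ Y, S.Finite ∧ S.ncard < X.ncard ∧ InjOn (N · ∩ S) X := by
  induction hn : X.ncard using Nat.strong_induction_on generalizing X with
  | _ n ih =>
    subst hn
    obtain hsub | ⟨u, hu, v, hv, huv⟩ := X.subsingleton_or_nontrivial
    · exact ⟨∅, empty_subset _, finite_empty, by simpa using hXne.ncard_pos hX,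
        hsub.injOn _⟩
    obtain ⟨y, hyY, hyuv⟩ : ∃ y ∈ Y, ¬(y ∈ N u ↔ y ∈ N v) := by
      by_contra! h
      exact huv (hY hu hv (ext fun y => and_congr_left fun hy => h y hy))
    set P := {x | y ∈ N x}
    have hX₁ : (X ∩ P).Nonempty := by
      by_cases hyu : y ∈ N u
      exacts [⟨u, hu, hyu⟩, ⟨v, hv, by tauto⟩]
    have hX₂ : (X \ P).Nonempty := by
      by_cases hyu : y ∈ N u
      exacts [⟨v, hv, by tauto⟩, ⟨u, hu, hyu⟩]
    have hcard := ncard_inter_add_ncard_sdiff_eq_ncard X P hX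
    have hpos₁ := hX₁.ncard_pos (hX.inter_of_left P)
    have hpos₂ := hX₂.ncard_pos hX.sdiff
    obtain ⟨S₁, hS₁Y, hS₁, hS₁card, hS₁inj⟩ :=
      ih _ (by omega) (hX.inter_of_left P) hX₁ (hY.mono inter_subset_left) rfl
    obtain ⟨S₂, hS₂Y, hS₂, hS₂card, hS₂inj⟩ :=
      ih _ (by omega) hX.sdiff hX₂ (hY.mono sdiff_subset) rfl
    refine ⟨insert y (S₁ ∪ S₂), insert_subset hyY (union_subset hS₁Y hS₂Y),
      (hS₁.union hS₂).insert y, ?_, injOn_inter_insert_union N y hS₁inj hS₂inj⟩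
    have := ncard_insert_le y (S₁ ∪ S₂)
    have := ncard_union_le S₁ S₂
    omega

/-- Once `S` separates `X`, at most one `x ∈ X` has an empty trace on `S`, so one more element
of `Y` makes every trace nonempty. -/
lemma exists_insert_inter_nonempty {X : Set α} {Y S : Set β} (hXne : X.Nonempty)
    (hS : InjOn (N · ∩ S) X) (hdom : ∀ x ∈ X, (N x ∩ Y).Nonempty) :
    ∃ y ∈ Y, ∀ x ∈ X, (N x ∩ insert y S).Nonempty := by
  by_cases h : ∀ x ∈ X, (N x ∩ S).Nonempty
  · obtain ⟨x, hx⟩ := hXne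
    obtain ⟨y, -, hyY⟩ := hdom x hx
    exact ⟨y, hyY, fun x hx => (h x hx).mono (inter_subset_inter_right _ (subset_insert _ _))⟩
  push Not at h
  obtain ⟨x₀, hx₀, hx₀S⟩ := h
  obtain ⟨y, hyx₀, hyY⟩ := hdom x₀ hx₀
  refine ⟨y, hyY, fun x hx => ?_⟩
  by_cases hxS : (N x ∩ S).Nonempty
  · exact hxS.mono (inter_subset_inter_right _ (subset_insert _ _))
  · rw [hS hx hx₀ ((not_nonempty_iff_eq_empty.1 hxS).trans hx₀S.symm)]
    exact ⟨y, hyx₀, mem_insert y S⟩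

end Traces

theorem stmt_5 {V : Type*} (G : SimpleGraph V) (X Y : Set V)
    (hXfin : X.Finite)
    (hsep : ∀ u ∈ X, ∀ v ∈ X, u ≠ v → cnbr G u ∩ Y ≠ cnbr G v ∩ Y)
    (hdom : ∀ x ∈ X, (cnbr G x ∩ Y).Nonempty) :
    ∃ C ⊆ Y, C.ncard ≤ X.ncard ∧
      (∀ u ∈ X, ∀ v ∈ X, u ≠ v → cnbr G u ∩ C ≠ cnbr G v ∩ C) ∧
      ∀ x ∈ X, (cnbr G x ∩ C).Nonempty := by
  obtain rfl | hXne := X.eq_empty_or_nonempty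
  · exact ⟨∅, empty_subset _, by simp, by simp, by simp⟩
  have hY : InjOn (cnbr G · ∩ Y) X := fun u hu v hv h =>
    by_contra fun huv => hsep u hu v hv huv h
  obtain ⟨S, hSY, -, hScard, hS⟩ := exists_subset_injOn_inter_ncard_lt (cnbr G) hXfin hXne hY
  obtain ⟨y, hyY, hC⟩ := exists_insert_inter_nonempty (cnbr G) hXne hS hdom
  refine ⟨insert y S, insert_subset hyY hSY, (ncard_insert_le y S).trans (by omega), ?_, hC⟩
  exact fun u hu v hv huv h => huv (injOn_inter_of_subset (cnbr G) (subset_insert y S) hS hu hv h)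
end

section
/- For every odd integer n >= 1, the minimum size of an identifying code of the path P_n on n vertices equals n/2 + 1/2, i.e., (n+1)/2. -/
open SimpleGraph

lemma mem_cnbr_path {n : ℕ} {x v : Fin n} :
    x ∈ cnbr (pathGraph n) v ↔ x.val = v.val ∨ x.val + 1 = v.val ∨ v.val + 1 = x.val := by
  simp only [cnbr, Set.mem_insert_iff, mem_neighborSet, pathGraph_adj, Fin.ext_iff]
  tauto

/-- pure arithmetic injectivity lemma for the even-vertices code -/
lemma nat_inj (n u v : ℕ) (hn : n % 2 = 1) (hu : u < n) (hv : v < n)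
    (key : ∀ x, x < n →
      (((x = u ∨ x + 1 = u ∨ u + 1 = x) ∧ x % 2 = 0) ↔
        ((x = v ∨ x + 1 = v ∨ v + 1 = x) ∧ x % 2 = 0))) : u = v := by
  by_cases hue : u % 2 = 0 <;> by_cases hve : v % 2 = 0
  · have h1 := (key u hu).mp ⟨Or.inl rfl, hue⟩
    omega
  · have h1 := (key u hu).mp ⟨Or.inl rfl, hue⟩
    have h2 := ((key (v - 1) (by omega)).mpr ⟨by omega, by omega⟩).1
    have h3 := ((key (v + 1) (by omega)).mpr ⟨by omega, by omega⟩).1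
    omega
  · have h1 := (key v hv).mpr ⟨Or.inl rfl, hve⟩
    have h2 := ((key (u - 1) (by omega)).mp ⟨by omega, by omega⟩).1
    have h3 := ((key (u + 1) (by omega)).mp ⟨by omega, by omega⟩).1
    omega
  · have h2 := ((key (u - 1) (by omega)).mp ⟨by omega, by omega⟩).1
    have h3 := ((key (u + 1) (by omega)).mp ⟨by omega, by omega⟩).1
    omega

theorem stmt_6 (n : ℕ) (hodd : Odd n) (hn : 1 ≤ n) :
    gammaID (SimpleGraph.pathGraph n) = (n + 1) / 2 := by
  have hn2 : n % 2 = 1 := Nat.odd_iff.mp hodd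
  set t := (n + 1) / 2 with ht
  -- the even-vertex code
  have hglt : ∀ j : Fin t, 2 * j.val < n := fun j => by have := j.2; omega
  set g : Fin t → Fin n := fun j => ⟨2 * j.val, hglt j⟩ with hg
  set C₀ : Set (Fin n) := Set.range g with hC₀
  have ginj : Function.Injective g := by
    intro a b hab
    have : 2 * a.val = 2 * b.val := congrArg Fin.val hab
    exact Fin.ext (by omega)
  have hmem : ∀ v : Fin n, v ∈ C₀ ↔ v.val % 2 = 0 := by
    intro v
    constructor
    · rintro ⟨j, rfl⟩; simp [hg, Nat.mul_mod_right]
    · intro hv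
      refine ⟨⟨v.val / 2, by have := v.2; omega⟩, Fin.ext ?_⟩
      show 2 * (v.val / 2) = v.val
      omega
  have hcard₀ : C₀.ncard = t := by
    rw [hC₀, ← Set.image_univ, Set.ncard_image_of_injective _ ginj, Set.ncard_univ,
      Nat.card_eq_fintype_card, Fintype.card_fin]
  have hcode : IsIdCode (pathGraph n) C₀ := by
    constructor
    · intro v
      by_cases hv : v.val % 2 = 0
      · exact ⟨v, mem_cnbr_path.mpr (Or.inl rfl), (hmem v).mpr hv⟩
      · refine ⟨⟨v.val - 1, by omega⟩, mem_cnbr_path.mpr ?_, (hmem _).mpr ?_⟩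
        · right; left; show v.val - 1 + 1 = v.val; omega
        · show (v.val - 1) % 2 = 0; omega
    · intro u v h
      have key : ∀ x : Fin n,
          ((x.val = u.val ∨ x.val + 1 = u.val ∨ u.val + 1 = x.val) ∧ x.val % 2 = 0) ↔
          ((x.val = v.val ∨ x.val + 1 = v.val ∨ v.val + 1 = x.val) ∧ x.val % 2 = 0) := by
        intro x
        have := Set.ext_iff.mp h x
        simpa only [Set.mem_inter_iff, mem_cnbr_path, hmem] using this
      exact Fin.ext (nat_inj n u.val v.val hn2 u.2 v.2 (fun x hx => key ⟨x, hx⟩))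
  -- lower bound
  have hlb : ∀ m : ℕ, (∃ C : Set (Fin n), IsIdCode (pathGraph n) C ∧ C.ncard = m) → t ≤ m := by
    rintro m ⟨C, ⟨hdom, hinj⟩, rfl⟩
    have hCfin : C.Finite := Set.toFinite C
    -- pair-distinguishing constraints
    have hpair : ∀ j, j + 1 < n → ∃ c ∈ C, c.val + 1 = j ∨ c.val = j + 2 := by
      intro j hj
      set u : Fin n := ⟨j, by omega⟩ with hu
      set v : Fin n := ⟨j + 1, hj⟩ with hv
      have hne : cnbr (pathGraph n) u ∩ C ≠ cnbr (pathGraph n) v ∩ C := by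
        intro hEq
        have := hinj u v hEq
        have := congrArg Fin.val this
        simp [hu, hv] at this
      have hne2 : ¬ ∀ x, x ∈ cnbr (pathGraph n) u ∩ C ↔ x ∈ cnbr (pathGraph n) v ∩ C := by
        intro hAll; exact hne (Set.ext hAll)
      push_neg at hne2
      obtain ⟨x, hx⟩ := hne2
      rcases hx with ⟨hx1, hx2⟩ | ⟨hx2, hx1⟩
      · obtain ⟨hx1a, hx1b⟩ := hx1
        refine ⟨x, hx1b, ?_⟩
        have h1 := mem_cnbr_path.mp hx1a
        have h2 : ¬ (x.val = j + 1 ∨ x.val + 1 = j + 1 ∨ j + 1 + 1 = x.val) := by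
          intro hc
          exact hx2 ⟨mem_cnbr_path.mpr (by simpa [hv] using hc), hx1b⟩
        simp [hu] at h1
        omega
      · obtain ⟨hx1a, hx1b⟩ := hx1
        refine ⟨x, hx1b, ?_⟩
        have h1 := mem_cnbr_path.mp hx1a
        have h2 : ¬ (x.val = j ∨ x.val + 1 = j ∨ j + 1 = x.val) := by
          intro hc
          exact hx2 ⟨mem_cnbr_path.mpr (by simpa [hu] using hc), hx1b⟩
        simp [hv] at h1
        omega
    -- endpoint domination constraints
    have h0 : ∃ c ∈ C, c.val ≤ 1 := by
      obtain ⟨x, hx1, hx2⟩ := hdom ⟨0, by omega⟩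
      refine ⟨x, hx2, ?_⟩
      have := mem_cnbr_path.mp hx1
      simp at this
      omega
    have hN : ∃ c ∈ C, n ≤ c.val + 2 := by
      obtain ⟨x, hx1, hx2⟩ := hdom ⟨n - 1, by omega⟩
      refine ⟨x, hx2, ?_⟩
      have := mem_cnbr_path.mp hx1
      simp at this
      omega
    have claim : ∀ i : Fin (n + 1), ∃ c : Fin n, c ∈ C ∧
        ((i.val = 0 ∧ c.val ≤ 1) ∨ (i.val = n ∧ n ≤ c.val + 2) ∨
          (1 ≤ i.val ∧ i.val < n ∧ (c.val + 2 = i.val ∨ c.val = i.val + 1))) := by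
      intro i
      rcases Nat.eq_zero_or_pos i.val with hi | hi
      · obtain ⟨c, hc1, hc2⟩ := h0
        exact ⟨c, hc1, Or.inl ⟨hi, hc2⟩⟩
      rcases eq_or_lt_of_le (Nat.lt_succ_iff.mp i.2) with hi2 | hi2
      · obtain ⟨c, hc1, hc2⟩ := hN
        exact ⟨c, hc1, Or.inr (Or.inl ⟨hi2.symm ▸ rfl, hc2⟩)⟩
      · obtain ⟨c, hc1, hc2⟩ := hpair (i.val - 1) (by omega)
        exact ⟨c, hc1, Or.inr (Or.inr ⟨hi, hi2, by omega⟩)⟩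
    choose f hf using claim
    classical
    have himg : Finset.univ.image f ⊆ hCfin.toFinset := by
      intro x hx
      obtain ⟨i, _, rfl⟩ := Finset.mem_image.mp hx
      exact hCfin.mem_toFinset.mpr (hf i).1
    have hfib : ∀ c ∈ Finset.univ.image f,
        (Finset.univ.filter fun i : Fin (n + 1) => f i = c).card ≤ 2 := by
      intro c _
      set A : Fin (n + 1) := if c.val ≤ 1 then ⟨0, by omega⟩ else ⟨c.val - 1, by have := c.2; omega⟩
        with hA
      set B : Fin (n + 1) := if h : n ≤ c.val + 2 then ⟨n, by omega⟩ else ⟨c.val + 2, by omega⟩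
        with hB
      have hsub : (Finset.univ.filter fun i : Fin (n + 1) => f i = c) ⊆ {A, B} := by
        intro i hi
        have hic : f i = c := (Finset.mem_filter.mp hi).2
        have hspec := (hf i).2
        rw [hic] at hspec
        simp only [Finset.mem_insert, Finset.mem_singleton]
        rcases hspec with ⟨hi0, hc1⟩ | ⟨hiN, hc2⟩ | ⟨hi1, hi2, hc3 | hc3⟩
        · left; rw [hA, if_pos hc1]; exact Fin.ext hi0
        · right; rw [hB, dif_pos hc2]; exact Fin.ext hiN
        · right; rw [hB, dif_neg (by omega)]; exact Fin.ext (show i.val = c.val + 2 by omega)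
        · left; rw [hA, if_neg (by omega)]; exact Fin.ext (show i.val = c.val - 1 by omega)
      calc (Finset.univ.filter fun i : Fin (n + 1) => f i = c).card
          ≤ ({A, B} : Finset (Fin (n + 1))).card := Finset.card_le_card hsub
        _ ≤ 2 := (Finset.card_insert_le _ _).trans (by simp)
    have hmain : n + 1 ≤ 2 * C.ncard := by
      have h1 := Finset.card_le_mul_card_image (f := f) Finset.univ 2 hfib
      have h2 : (Finset.univ.image f).card ≤ hCfin.toFinset.card := Finset.card_le_card himg
      have h3 : hCfin.toFinset.card = C.ncard := (Set.ncard_eq_toFinset_card C hCfin).symm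
      simp only [Finset.card_univ, Fintype.card_fin] at h1
      omega
    omega
  have hmemS : t ∈ {m | ∃ C : Set (Fin n), IsIdCode (pathGraph n) C ∧ C.ncard = m} :=
    ⟨C₀, hcode, hcard₀⟩
  exact le_antisymm (Nat.sInf_le hmemS) (le_csInf ⟨t, hmemS⟩ hlb)
end

section
/- For every even integer n >= 4, the minimum size of an identifying code of the path P_n on n vertices equals n/2 + 1. -/
open SimpleGraph

/-! On a path the identifying condition is local: every vertex needs a code vertex within
distance one, and two vertices at distance one or two need a code vertex in the symmetric
difference of their closed neighbourhoods. Reading a code as a binary word, padded by a `false`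
at each end, these conditions forbid the patterns `000` and `0··0`, and a word avoiding them has
at most `(length + 1) / 2` zeros unless it is `00`; this gives `n < 2 |C|`. Conversely, the
even vertices together with `n - 3` form an identifying code with `n / 2 + 1` elements. -/

lemma mem_cnbr_pathGraph {n : ℕ} {v w : Fin n} :
    w ∈ cnbr (pathGraph n) v ↔ v.val ≤ w.val + 1 ∧ w.val ≤ v.val + 1 := by
  simp only [cnbr, Set.mem_insert_iff, mem_neighborSet, pathGraph_adj, Fin.ext_iff]
  omega

theorem isIdCode_pathGraph_iff {n : ℕ} {C : Set (Fin n)} :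
    IsIdCode (pathGraph n) C ↔
      (∀ v : Fin n, ∃ w ∈ C, v.val ≤ w.val + 1 ∧ w.val ≤ v.val + 1) ∧
      ∀ u v : Fin n, u.val < v.val → v.val ≤ u.val + 2 → ∃ w ∈ C,
        u.val ≤ w.val + 1 ∧ w.val + 2 ≤ v.val ∨ u.val + 2 ≤ w.val ∧ w.val ≤ v.val + 1 := by
  constructor
  · refine fun h => ⟨fun v => ?_, fun u v huv hvu => ?_⟩
    · obtain ⟨w, hwv, hwC⟩ := h.1 v
      exact ⟨w, hwC, mem_cnbr_pathGraph.1 hwv⟩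
    · by_contra! hsep
      refine huv.ne (congrArg Fin.val (h.2 u v (Set.ext fun w => ?_)))
      by_cases hwC : w ∈ C
      · have := hsep w hwC
        simp only [Set.mem_inter_iff, mem_cnbr_pathGraph, hwC, and_true]
        omega
      · simp [hwC]
  · rintro ⟨hdom, hsep⟩
    refine ⟨fun v => ?_, fun u v huv => ?_⟩
    · obtain ⟨w, hwC, hw⟩ := hdom v
      exact ⟨w, mem_cnbr_pathGraph.2 hw, hwC⟩
    · by_contra hne
      wlog hlt : u.val < v.val generalizing u v
      · exact this v u huv.symm (Ne.symm hne) (by omega)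
      have hmem w := Set.ext_iff.1 huv w
      simp only [Set.mem_inter_iff, mem_cnbr_pathGraph] at hmem
      obtain ⟨w, hwC, hw⟩ : ∃ w ∈ C, (u.val ≤ w.val + 1 ∧ w.val ≤ u.val + 1 ∧ w.val + 2 ≤ v.val) ∨
          (v.val ≤ w.val + 1 ∧ w.val ≤ v.val + 1 ∧ u.val + 2 ≤ w.val) := by
        by_cases hvu : v.val ≤ u.val + 2
        · obtain ⟨w, hwC, hw⟩ := hsep u v hlt hvu
          exact ⟨w, hwC, by omega⟩
        · obtain ⟨w, hwC, hw⟩ := hdom u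
          exact ⟨w, hwC, by omega⟩
      have := hmem w
      rcases hw with hw | hw
      · have := this.1 ⟨by omega, hwC⟩; omega
      · have := this.2 ⟨by omega, hwC⟩; omega

def AvoidsZeroPatterns (l : List Bool) : Prop :=
  (∀ i, l.getD i true ∨ l.getD (i + 1) true ∨ l.getD (i + 2) true) ∧
    ∀ i, l.getD i true ∨ l.getD (i + 3) true

namespace AvoidsZeroPatterns

theorem tail {b : Bool} {l : List Bool} (h : AvoidsZeroPatterns (b :: l)) :
    AvoidsZeroPatterns l :=
  ⟨fun i => h.1 (i + 1), fun i => h.2 (i + 1)⟩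

theorem eq_or_two_mul_count_false_le :
    ∀ {l : List Bool}, AvoidsZeroPatterns l →
      l = [false, false] ∨ 2 * l.count false ≤ l.length + 1
  | [], _ => by simp
  | [b], _ => by cases b <;> simp
  | true :: l, h => by
    rcases eq_or_two_mul_count_false_le h.tail with rfl | hl
    · simp
    · right; grind
  | false :: true :: l, h => by
    rcases eq_or_two_mul_count_false_le h.tail.tail with rfl | hl
    · simpa using h.2 0
    · right; grind
  | false :: false :: l, h => by
    have h₀ : l.getD 0 true := by simpa using h.1 0
    have h₁ : l.getD 1 true := by simpa using h.2 0
    have h₂ : l.getD 2 true := by simpa using h.2 1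
    match l with
    | [] => simp
    | [a] => simp_all
    | [a, b] => simp_all
    | a :: b :: c :: l =>
      simp only [List.getD_cons_zero, List.getD_cons_succ] at h₀ h₁ h₂
      subst h₀ h₁ h₂
      rcases eq_or_two_mul_count_false_le h.tail.tail.tail.tail.tail with rfl | hl
      · simp
      · right; grind

end AvoidsZeroPatterns

section paddedWord

variable {n : ℕ} (C : Set (Fin n)) [DecidablePred (· ∈ C)]

def paddedWord : List Bool :=
  false :: (List.ofFn fun i => decide (i ∈ C)) ++ [false]

@[simp]
lemma length_paddedWord : (paddedWord C).length = n + 2 := by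
  simp [paddedWord]

lemma count_true_ofFn_mem : (List.ofFn fun i => decide (i ∈ C)).count true = C.ncard := by
  rw [Set.ncard_eq_toFinset_card', ← List.Vector.toList_ofFn,
    ← Fin.card_filter_univ_eq_vector_get_eq_count]
  simp

lemma count_false_paddedWord_add_ncard : (paddedWord C).count false + C.ncard = n + 2 := by
  have hcount := List.count_false_add_count_true (List.ofFn fun i => decide (i ∈ C))
  rw [count_true_ofFn_mem, List.length_ofFn] at hcount
  simp only [paddedWord, List.count_cons_self, List.count_append, List.count_nil]
  omega

variable {C}

lemma getD_paddedWord_of_mem {w : Fin n} (hw : w ∈ C) : (paddedWord C).getD (w.val + 1) true := by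
  simp [paddedWord, List.getD_eq_getElem?_getD, hw]

lemma getD_paddedWord_of_le {j : ℕ} (hj : n + 2 ≤ j) : (paddedWord C).getD j true :=
  List.getD_eq_default _ _ (by simpa using hj)

end paddedWord

theorem avoidsZeroPatterns_paddedWord {n : ℕ} {C : Set (Fin n)} [DecidablePred (· ∈ C)]
    (h : IsIdCode (pathGraph n) C) : AvoidsZeroPatterns (paddedWord C) := by
  obtain ⟨hdom, hsep⟩ := isIdCode_pathGraph_iff.1 h
  have htrue : ∀ j, (n + 2 ≤ j ∨ ∃ w ∈ C, w.val + 1 = j) → (paddedWord C).getD j true := by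
    rintro j (hj | ⟨w, hwC, rfl⟩)
    exacts [getD_paddedWord_of_le hj, getD_paddedWord_of_mem hwC]
  refine ⟨fun j => ?_, fun j => ?_⟩
  · by_cases hj : j < n
    · obtain ⟨w, hwC, hw⟩ := hdom ⟨j, hj⟩
      rcases (by simp only at hw; omega : w.val + 1 = j ∨ w.val + 1 = j + 1 ∨ w.val + 1 = j + 2)
        with hw | hw | hw
      exacts [Or.inl (htrue _ (.inr ⟨w, hwC, hw⟩)), Or.inr (.inl (htrue _ (.inr ⟨w, hwC, hw⟩))),
        Or.inr (.inr (htrue _ (.inr ⟨w, hwC, hw⟩)))]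
    · exact Or.inr (.inr (htrue _ (.inl (by omega))))
  · by_cases hj : j + 1 < n
    · obtain ⟨w, hwC, hw⟩ := hsep ⟨j, by omega⟩ ⟨j + 1, hj⟩ (by simp) (by simp)
      rcases (by simp only at hw; omega : w.val + 1 = j ∨ w.val + 1 = j + 3) with hw | hw
      exacts [Or.inl (htrue _ (.inr ⟨w, hwC, hw⟩)), Or.inr (htrue _ (.inr ⟨w, hwC, hw⟩))]
    · exact Or.inr (htrue _ (.inl (by omega)))

theorem lt_two_mul_ncard_of_isIdCode_pathGraph {n : ℕ} {C : Set (Fin n)} (hn : 0 < n)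
    (h : IsIdCode (pathGraph n) C) : n < 2 * C.ncard := by
  classical
  have hcount := count_false_paddedWord_add_ncard C
  rcases (avoidsZeroPatterns_paddedWord h).eq_or_two_mul_count_false_le with hword | hword
  · have := congrArg List.length hword
    simp only [length_paddedWord, List.length_cons, List.length_nil] at this
    omega
  · rw [length_paddedWord] at hword
    omega

-- `n - 3` separates `n - 2` from `n - 1`, whose traces on the even vertices are both `{n - 2}`.
def pathCode (n : ℕ) : Set (Fin n) := {i | i.val % 2 = 0 ∨ i.val + 3 = n}

theorem isIdCode_pathCode {n : ℕ} (heven : Even n) (hn : 4 ≤ n) :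
    IsIdCode (pathGraph n) (pathCode n) := by
  rw [Nat.even_iff] at heven
  refine isIdCode_pathGraph_iff.2 ⟨fun v => ?_, fun u v huv hvu => ?_⟩
  · obtain ⟨k, hk⟩ : ∃ k, k ≤ v.val ∧ v.val ≤ k + 1 ∧ k % 2 = 0 := ⟨v.val - v.val % 2, by omega⟩
    exact ⟨⟨k, by omega⟩, Or.inl hk.2.2, by simp only; omega⟩
  · obtain ⟨k, hk⟩ : ∃ k < n, (k % 2 = 0 ∨ k + 3 = n) ∧
        (u.val ≤ k + 1 ∧ k + 2 ≤ v.val ∨ u.val + 2 ≤ k ∧ k ≤ v.val + 1) := by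
      by_cases hu : u.val % 2 = 0
      · by_cases hv : v.val = u.val + 2
        · exact ⟨u.val, by omega⟩
        · by_cases hun : u.val + 2 < n
          · exact ⟨u.val + 2, by omega⟩
          · exact ⟨u.val - 1, by omega⟩
      · exact ⟨u.val - 1, by omega⟩
    exact ⟨⟨k, hk.1⟩, hk.2.1, hk.2.2⟩

theorem ncard_pathCode {n : ℕ} (heven : Even n) (hn : 4 ≤ n) :
    (pathCode n).ncard = n / 2 + 1 := by
  rw [Nat.even_iff] at heven
  let f : Fin (n / 2 + 1) → Fin n := fun j =>
    ⟨if j.val < n / 2 then 2 * j.val else n - 3, by split <;> omega⟩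
  have hf : Function.Injective f := by
    intro a b hab
    simp only [f, Fin.ext_iff] at hab ⊢
    split_ifs at hab <;> omega
  have hrange : Set.range f = pathCode n := by
    ext i
    simp only [Set.mem_range, pathCode, Set.mem_ofPred_eq, f, Fin.ext_iff]
    constructor
    · rintro ⟨j, hj⟩
      split_ifs at hj <;> omega
    · rintro (hi | hi)
      · exact ⟨⟨i.val / 2, by omega⟩, by simp only; split_ifs <;> omega⟩
      · exact ⟨⟨n / 2, by omega⟩, by simp only; split_ifs <;> omega⟩
  rw [← hrange, Set.ncard_range_of_injective hf, Nat.card_eq_fintype_card, Fintype.card_fin]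

theorem stmt_7 (n : ℕ) (heven : Even n) (hn : 4 ≤ n) :
    gammaID (SimpleGraph.pathGraph n) = n / 2 + 1 := by
  have hcode : n / 2 + 1 ∈ {k | ∃ C : Set (Fin n), IsIdCode (pathGraph n) C ∧ C.ncard = k} :=
    ⟨pathCode n, isIdCode_pathCode heven hn, ncard_pathCode heven hn⟩
  refine le_antisymm (Nat.sInf_le hcode) (le_csInf ⟨_, hcode⟩ ?_)
  rintro k ⟨C, hC, rfl⟩
  have := lt_two_mul_ncard_of_isIdCode_pathGraph (by omega) hC
  omega
end

section
/- For every even integer n >= 6, the minimum size of an identifying code of the cycle C_n on n vertices equals n/2. -/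
open SimpleGraph

/-!
Lower bound: if `C` identifies the vertices of a graph of maximum degree `d`, the traces
`N[v] ∩ C` are nonempty and pairwise distinct, so at most `|C|` of them are singletons and
`Σ_v |N[v] ∩ C| ≥ 2|V| - |C|`; counting the other way the sum is at most `(d + 1)|C|`, hence
`2|V| ≤ (d + 2)|C|`. For a cycle `d = 2`, so `|C| ≥ n / 2`.

Upper bound: on an even cycle the even vertices form an identifying code. An even vertex
sees only itself, an odd vertex `v` sees `{v - 1, v + 1}`, and two odd vertices with the same
trace coincide once `4 ≠ 0` in `Fin n`, i.e. `n ≥ 6`.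
-/

open Finset

lemma Finset.two_mul_card_le_sum_card_add_card {ι α : Type*} [Fintype ι] {s : Finset α}
    {t : ι → Finset α} (ht : Function.Injective t) (hne : ∀ i, (t i).Nonempty)
    (hsub : ∀ i, t i ⊆ s) : 2 * Fintype.card ι ≤ ∑ i, #(t i) + #s := by
  classical
  set S := univ.filter fun i => #(t i) = 1
  have hS : #S ≤ #s := calc
    #S ≤ #(s.powersetCard 1) := by
      refine card_le_card_of_injOn t (fun i hi => ?_) ht.injOn
      exact mem_powersetCard.2 ⟨hsub i, (mem_filter.1 hi).2⟩
    _ = #s := by simp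
  calc 2 * Fintype.card ι = ∑ _i : ι, 2 := by simp [mul_comm]
    _ ≤ ∑ i, (#(t i) + if #(t i) = 1 then 1 else 0) := by
      refine sum_le_sum fun i _ => ?_
      have := (hne i).card_pos
      split_ifs <;> omega
    _ = ∑ i, #(t i) + #S := by rw [sum_add_distrib, sum_boole, Nat.cast_id]
    _ ≤ ∑ i, #(t i) + #s := by omega

theorem IsIdCode.two_mul_card_le {V : Type*} [Fintype V] {G : SimpleGraph V}
    [DecidableRel G.Adj] {d : ℕ} (hd : ∀ v, G.degree v ≤ d) {C : Set V} (hC : IsIdCode G C) :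
    2 * Fintype.card V ≤ (d + 2) * C.ncard := by
  classical
  set t : V → Finset V := fun v => C.toFinset.filter (· ∈ cnbr G v)
  have ht : ∀ v, (t v : Set V) = cnbr G v ∩ C := fun v => by ext; simp [t, and_comm]
  have hinj : Function.Injective t := fun u v h => hC.2 u v <| by rw [← ht, ← ht, h]
  have hne : ∀ v, (t v).Nonempty := fun v => by simpa [← Finset.coe_nonempty, ht] using hC.1 v
  have hcount : ∑ v, #(t v) ≤ (d + 1) * #C.toFinset := calc
    ∑ v, #(t v) = ∑ c ∈ C.toFinset, #(univ.filter fun v => c ∈ cnbr G v) :=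
      sum_card_bipartiteAbove_eq_sum_card_bipartiteBelow (fun v c => c ∈ cnbr G v)
    _ ≤ ∑ _c ∈ C.toFinset, (d + 1) := by
      refine sum_le_sum fun c _ => ?_
      calc #(univ.filter fun v => c ∈ cnbr G v) = #(insert c (G.neighborFinset c)) := by
            congr 1; ext v; simp [cnbr, eq_comm, G.adj_comm]
        _ ≤ d + 1 := (card_insert_le _ _).trans (by simpa using hd c)
    _ = (d + 1) * #C.toFinset := by simp [mul_comm]
  have := two_mul_card_le_sum_card_add_card hinj hne fun v => filter_subset _ _
  rw [Set.ncard_eq_toFinset_card']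
  linarith

lemma cnbr_cycleGraph {n : ℕ} (v : Fin (n + 2)) :
    cnbr (cycleGraph (n + 2)) v = {v - 1, v, v + 1} := by
  rw [cnbr, cycleGraph_neighborSet, Set.insert_comm]

lemma cycleGraph_degree_le_two {n : ℕ} (v : Fin (n + 2)) : (cycleGraph (n + 2)).degree v ≤ 2 :=
  cycleGraph_degree_two_le ▸ card_le_two

lemma gammaID_eq {V : Type*} {G : SimpleGraph V} {k : ℕ}
    (hcode : ∃ C, IsIdCode G C ∧ C.ncard = k)
    (hle : ∀ C, IsIdCode G C → k ≤ C.ncard) : gammaID G = k :=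
  le_antisymm (Nat.sInf_le hcode) (le_csInf ⟨k, hcode⟩ fun _ ⟨C, hC, hk⟩ => hk ▸ hle C hC)

def evenVertices (n : ℕ) : Set (Fin n) := {v | Even v.val}

section EvenCycle

variable {n : ℕ}

lemma Fin.even_val_add_one_iff (hn : Even n) (v : Fin (n + 2)) :
    Even (v + 1).val ↔ ¬Even v.val := by
  rw [Fin.val_add_one]
  split_ifs with h
  · simp [h, Nat.even_add_one, hn]
  · exact Nat.even_add_one

lemma Fin.even_val_sub_one_iff (hn : Even n) (v : Fin (n + 2)) :
    Even (v - 1).val ↔ ¬Even v.val := by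
  conv_rhs => rw [← sub_add_cancel v 1, Fin.even_val_add_one_iff hn]
  exact not_not.symm

lemma cnbr_inter_evenVertices_of_even (hn : Even n) {v : Fin (n + 2)} (hv : Even v.val) :
    cnbr (cycleGraph (n + 2)) v ∩ evenVertices (n + 2) = {v} := by
  ext x
  simp only [cnbr_cycleGraph, evenVertices, Set.mem_inter_iff, Set.mem_insert_iff,
    Set.mem_singleton_iff, Set.mem_ofPred_eq]
  constructor
  · rintro ⟨rfl | rfl | rfl, hx⟩
    · exact absurd hv ((Fin.even_val_sub_one_iff hn v).1 hx)
    · rfl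
    · exact absurd hv ((Fin.even_val_add_one_iff hn v).1 hx)
  · rintro rfl
    exact ⟨Or.inr (Or.inl rfl), hv⟩

lemma cnbr_inter_evenVertices_of_not_even (hn : Even n) {v : Fin (n + 2)} (hv : ¬Even v.val) :
    cnbr (cycleGraph (n + 2)) v ∩ evenVertices (n + 2) = {v - 1, v + 1} := by
  ext x
  simp only [cnbr_cycleGraph, evenVertices, Set.mem_inter_iff, Set.mem_insert_iff,
    Set.mem_singleton_iff, Set.mem_ofPred_eq]
  have := (Fin.even_val_sub_one_iff hn v).2 hv
  have := (Fin.even_val_add_one_iff hn v).2 hv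
  constructor
  · rintro ⟨rfl | rfl | rfl, hx⟩ <;> tauto
  · rintro (rfl | rfl) <;> tauto

theorem isIdCode_evenVertices (hn : Even n) (h4 : 4 ≤ n) :
    IsIdCode (cycleGraph (n + 2)) (evenVertices (n + 2)) := by
  refine ⟨fun v => ?_, fun u v huv => ?_⟩
  · by_cases hv : Even v.val
    · simp [cnbr_inter_evenVertices_of_even hn hv]
    · simp [cnbr_inter_evenVertices_of_not_even hn hv]
  have two_ne_zero : (2 : Fin (n + 2)) ≠ 0 := by
    simp [Fin.ext_iff, Nat.mod_eq_of_lt (show 2 < n + 2 by omega)]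
  have four_ne_zero : (4 : Fin (n + 2)) ≠ 0 := by
    simp [Fin.ext_iff, Nat.mod_eq_of_lt (show 4 < n + 2 by omega)]
  open Fin.CommRing in
  by_cases hu : Even u.val <;> by_cases hv : Even v.val <;>
    simp only [cnbr_inter_evenVertices_of_even hn, cnbr_inter_evenVertices_of_not_even hn,
      hu, hv, not_false_eq_true] at huv
  · exact Set.singleton_eq_singleton_iff.1 huv
  · have h₁ : v - 1 = u := by simpa using huv.symm.subset (Set.mem_insert _ _)
    have h₂ : v + 1 = u := by simpa using huv.symm.subset (by simp)
    exact absurd (by linear_combination h₂ - h₁) two_ne_zero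
  · have h₁ : u - 1 = v := by simpa using huv.subset (Set.mem_insert _ _)
    have h₂ : u + 1 = v := by simpa using huv.subset (by simp)
    exact absurd (by linear_combination h₂ - h₁) two_ne_zero
  · rcases Set.pair_eq_pair_iff.1 huv with ⟨h, -⟩ | ⟨h₁, h₂⟩
    · exact sub_left_inj.1 h
    · exact absurd (by linear_combination h₂ - h₁) four_ne_zero

theorem ncard_evenVertices (hn : Even n) : (evenVertices n).ncard = n / 2 := by
  obtain ⟨k, rfl⟩ := hn
  have : evenVertices (k + k) =
      Set.range fun i : Fin k => (⟨2 * i, by omega⟩ : Fin (k + k)) := by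
    ext v
    simp only [evenVertices, Set.mem_ofPred_eq, Set.mem_range, Fin.ext_iff]
    exact ⟨fun ⟨j, hj⟩ => ⟨⟨j, by omega⟩, by simp only; omega⟩,
      fun ⟨i, hi⟩ => ⟨i, by omega⟩⟩
  rw [this, Set.ncard_range_of_injective fun i j h => by simpa [Fin.ext_iff] using h]
  rw [Nat.card_eq_fintype_card, Fintype.card_fin]
  omega

end EvenCycle

theorem stmt_8 (n : ℕ) (heven : Even n) (hn : 6 ≤ n) :
    gammaID (SimpleGraph.cycleGraph n) = n / 2 := by
  obtain ⟨n, rfl⟩ : ∃ k, n = k + 2 := ⟨n - 2, by omega⟩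
  have hn' : Even n := by simpa [Nat.even_add] using heven
  refine gammaID_eq ⟨_, isIdCode_evenVertices hn' (by omega), ncard_evenVertices heven⟩ ?_
  intro C hC
  have := hC.two_mul_card_le cycleGraph_degree_le_two
  simp only [Fintype.card_fin] at this
  omega
end

section
/- For every odd integer n >= 7, the minimum size of an identifying code of the cycle C_n equals n/2 + 3/2, i.e., (n+3)/2. -/
open SimpleGraph

/-!
An identifying code of the cycle on `ℤ/n` is exactly a set `C` with `x ∈ C ∨ x + 3 ∈ C` for all
`x` (this separates `x + 1` from `x + 2`) and `x ∈ C ∨ x + 1 ∈ C ∨ x + 2 ∈ C` (this dominates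
`x + 1`). The first condition says `C ∪ (C - 3)` is everything, so inclusion–exclusion gives
`2|C| = n + |T|` with `T = C ∩ (C - 3)`; as `n` is odd, so is `|T|`. If `T = {x₀}`, membership in
`C` alternates along every `+3`-walk avoiding `x₀`. When `3 ∣ n`, the walk from `x₀ + 1` closes
up after the odd number `n` of steps, which is impossible; otherwise the walk from `x₀ + 3` runs
through all vertices and leaves three consecutive ones outside `C`. Hence `|T| ≥ 3`, i.e.
`|C| ≥ (n + 3) / 2`, and the even vertices together with `1` attain this bound.
-/

open scoped Fin.CommRing

theorem two_mul_ncard_eq_card_add_ncard {A : Type*} [AddGroup A] [Finite A] {C : Set A} {a : A}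
    (h : ∀ x, x ∈ C ∨ x + a ∈ C) :
    2 * C.ncard = Nat.card A + {x | x ∈ C ∧ x + a ∈ C}.ncard := by
  have hshift : ((· + a) ⁻¹' C).ncard = C.ncard :=
    Set.ncard_preimage_of_injective_subset_range (add_left_injective a)
      fun x _ ↦ ⟨x - a, sub_add_cancel x a⟩
  have hunion : C ∪ (· + a) ⁻¹' C = Set.univ := Set.eq_univ_of_forall h
  have hinter : C ∩ (· + a) ⁻¹' C = {x | x ∈ C ∧ x + a ∈ C} := rfl
  rw [← Set.ncard_univ, ← hunion, ← hinter, Set.ncard_union_add_ncard_inter, hshift, two_mul]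

lemma mem_add_nsmul_iff_even {M : Type*} [AddMonoid M] {C : Set M} {a x₀ y : M}
    (hstep : ∀ x ≠ x₀, (x + a ∈ C ↔ x ∉ C)) {K : ℕ} (havoid : ∀ j < K, y + j • a ≠ x₀) :
    ∀ j ≤ K, (y + j • a ∈ C ↔ (y ∈ C ↔ Even j)) := by
  intro j hj
  induction j with
  | zero => simp
  | succ j ih =>
    rw [succ_nsmul, ← add_assoc, hstep _ (havoid j (by omega)), ih (by omega), Nat.even_add_one]
    tauto

namespace Fin

variable {n : ℕ} [NeZero n]

lemma natCast_ne_zero_of_pos_of_lt {a : ℕ} (ha : 0 < a) (han : a < n) : (a : Fin n) ≠ 0 := by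
  rw [Ne, natCast_eq_zero]
  exact Nat.not_dvd_of_pos_of_lt ha han

lemma ofNat_ne_zero_of_lt (k : ℕ) [k.AtLeastTwo] (hk : k < n) : (OfNat.ofNat k : Fin n) ≠ 0 := by
  exact_mod_cast natCast_ne_zero_of_pos_of_lt (NeZero.pos k) hk

lemma one_ne_zero_of_lt (hn : 1 < n) : (1 : Fin n) ≠ 0 := by
  exact_mod_cast natCast_ne_zero_of_pos_of_lt Nat.one_pos hn

end Fin

section CycleGraph

variable {n : ℕ} [NeZero n] {C : Set (Fin n)}

local notation "G" => cycleGraph n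

lemma mem_cnbr_cycleGraph_iff (hn : 2 ≤ n) {x v : Fin n} :
    x ∈ cnbr G v ↔ x = v - 1 ∨ x = v ∨ x = v + 1 := by
  obtain ⟨m, rfl⟩ : ∃ m, n = m + 2 := ⟨n - 2, by omega⟩
  rw [cnbr, cycleGraph_neighborSet]
  simp only [Set.mem_insert_iff, Set.mem_singleton_iff]
  tauto

lemma cnbr_cycleGraph_inter_nonempty_iff (hn : 2 ≤ n) (v : Fin n) :
    (cnbr G v ∩ C).Nonempty ↔ v - 1 ∈ C ∨ v ∈ C ∨ v + 1 ∈ C := by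
  simp only [Set.Nonempty, Set.mem_inter_iff, mem_cnbr_cycleGraph_iff hn]
  constructor
  · rintro ⟨x, (rfl | rfl | rfl), hx⟩ <;> simp [hx]
  · rintro (h | h | h) <;> exact ⟨_, by simp, h⟩

lemma cnbr_cycleGraph_inter_add_one_eq_add_two (hn : 2 ≤ n) {x : Fin n} (hx : x ∉ C)
    (hx3 : x + 3 ∉ C) : cnbr G (x + 1) ∩ C = cnbr G (x + 2) ∩ C := by
  ext y
  simp only [Set.mem_inter_iff, mem_cnbr_cycleGraph_iff hn]
  constructor
  · rintro ⟨(rfl | rfl | rfl), hy⟩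
    · exact absurd hy (by simpa using hx)
    · exact ⟨by left; ring, hy⟩
    · exact ⟨by right; left; ring, hy⟩
  · rintro ⟨(rfl | rfl | rfl), hy⟩
    · exact ⟨by right; left; ring, hy⟩
    · exact ⟨by right; right; ring, hy⟩
    · exact absurd hy (by rwa [add_assoc, show (2 : Fin n) + 1 = 3 by ring])

lemma cnbr_cycleGraph_inter_ne_add_one (hn : 4 ≤ n) (hA : ∀ x, x ∈ C ∨ x + 3 ∈ C) (u : Fin n) :
    cnbr G u ∩ C ≠ cnbr G (u + 1) ∩ C := by
  have h1 := Fin.one_ne_zero_of_lt (n := n) (by omega)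
  have h2 := Fin.ofNat_ne_zero_of_lt (n := n) 2 (by omega)
  have h3 := Fin.ofNat_ne_zero_of_lt (n := n) 3 (by omega)
  have hmem := @mem_cnbr_cycleGraph_iff n _ (by omega)
  intro h
  rcases hA (u - 1) with hc | hc
  · have hc' : u - 1 ∈ cnbr G (u + 1) ∩ C := h ▸ ⟨hmem.2 (.inl rfl), hc⟩
    rcases hmem.1 hc'.1 with e | e | e
    exacts [h1 (by linear_combination -e), h2 (by linear_combination -e),
      h3 (by linear_combination -e)]
  · rw [show u - 1 + 3 = u + 1 + 1 by ring] at hc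
    have hc' : u + 1 + 1 ∈ cnbr G u ∩ C := h ▸ ⟨hmem.2 (.inr (.inr rfl)), hc⟩
    rcases hmem.1 hc'.1 with e | e | e
    exacts [h3 (by linear_combination e), h2 (by linear_combination e),
      h1 (by linear_combination e)]

lemma cnbr_cycleGraph_inter_ne_add_two (hn : 5 ≤ n) (hA : ∀ x, x ∈ C ∨ x + 3 ∈ C) (u : Fin n) :
    cnbr G u ∩ C ≠ cnbr G (u + 2) ∩ C := by
  have h1 := Fin.one_ne_zero_of_lt (n := n) (by omega)
  have h2 := Fin.ofNat_ne_zero_of_lt (n := n) 2 (by omega)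
  have h3 := Fin.ofNat_ne_zero_of_lt (n := n) 3 (by omega)
  have h4 := Fin.ofNat_ne_zero_of_lt (n := n) 4 (by omega)
  have hmem := @mem_cnbr_cycleGraph_iff n _ (by omega)
  intro h
  rcases hA (u - 1) with hc | hc
  · have hc' : u - 1 ∈ cnbr G (u + 2) ∩ C := h ▸ ⟨hmem.2 (.inl rfl), hc⟩
    rcases hmem.1 hc'.1 with e | e | e
    exacts [h2 (by linear_combination -e), h3 (by linear_combination -e),
      h4 (by linear_combination -e)]
  · rw [show u - 1 + 3 = u + 2 by ring] at hc
    have hc' : u + 2 ∈ cnbr G u ∩ C := h ▸ ⟨hmem.2 (.inr (.inl rfl)), hc⟩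
    rcases hmem.1 hc'.1 with e | e | e
    exacts [h3 (by linear_combination e), h2 (by linear_combination e),
      h1 (by linear_combination e)]

lemma isIdCode_cycleGraph_iff (hn : 5 ≤ n) :
    IsIdCode G C ↔ (∀ x, x ∈ C ∨ x + 3 ∈ C) ∧ ∀ x, x ∈ C ∨ x + 1 ∈ C ∨ x + 2 ∈ C := by
  have hdom (x : Fin n) : (cnbr G (x + 1) ∩ C).Nonempty ↔ x ∈ C ∨ x + 1 ∈ C ∨ x + 2 ∈ C := by
    rw [cnbr_cycleGraph_inter_nonempty_iff (by omega), add_sub_cancel_right, add_assoc,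
      one_add_one_eq_two]
  constructor
  · rintro ⟨hne, hinj⟩
    refine ⟨fun x ↦ ?_, fun x ↦ (hdom x).1 (hne _)⟩
    by_contra! hx
    have := hinj _ _ (cnbr_cycleGraph_inter_add_one_eq_add_two (by omega) hx.1 hx.2)
    exact Fin.one_ne_zero_of_lt (n := n) (by omega) (by linear_combination -this)
  · rintro ⟨hA, hB⟩
    have hne (v : Fin n) : (cnbr G v ∩ C).Nonempty := by simpa using (hdom (v - 1)).2 (hB _)
    refine ⟨hne, fun u v h ↦ ?_⟩
    obtain ⟨c, hcu, hc⟩ := hne u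
    have hcv : c ∈ cnbr G v ∩ C := h ▸ ⟨hcu, hc⟩
    have ne1 := cnbr_cycleGraph_inter_ne_add_one (by omega) hA
    have ne2 := cnbr_cycleGraph_inter_ne_add_two hn hA
    rcases (mem_cnbr_cycleGraph_iff (by omega)).1 hcu with eu | eu | eu <;>
      rcases (mem_cnbr_cycleGraph_iff (by omega)).1 hcv.1 with ev | ev | ev
    · linear_combination ev - eu
    · exact absurd h.symm (by rw [show u = v + 1 by linear_combination ev - eu]; exact ne1 v)
    · exact absurd h.symm (by rw [show u = v + 2 by linear_combination ev - eu]; exact ne2 v)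
    · exact absurd h (by rw [show v = u + 1 by linear_combination eu - ev]; exact ne1 u)
    · linear_combination ev - eu
    · exact absurd h.symm (by rw [show u = v + 1 by linear_combination ev - eu]; exact ne1 v)
    · exact absurd h (by rw [show v = u + 2 by linear_combination eu - ev]; exact ne2 u)
    · exact absurd h (by rw [show v = u + 1 by linear_combination eu - ev]; exact ne1 u)
    · linear_combination ev - eu

lemma exists_odd_nsmul_three_add_one_add_two (hodd : Odd n) (h3 : ¬ 3 ∣ n) (hn : 7 ≤ n) :
    ∃ i j k : ℕ, Odd i ∧ Odd j ∧ Odd k ∧ i < n ∧ j < n ∧ k < n ∧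
      j • (3 : Fin n) = i • 3 + 1 ∧ k • (3 : Fin n) = i • 3 + 2 := by
  simp only [nsmul_eq_mul]
  obtain ⟨q, hq | hq⟩ : ∃ q, n = 6 * q + 1 ∨ n = 6 * q + 5 := by
    obtain ⟨w, rfl⟩ := hodd
    exact ⟨(2 * w + 1) / 6, by omega⟩
  · have hzero : ((6 * q + 1 : ℕ) : Fin n) = 0 := by rw [Fin.natCast_eq_zero, ← hq]
    push_cast at hzero
    refine ⟨4 * q + 1, 2 * q + 1, 1, ⟨2 * q, by ring⟩, ⟨q, by ring⟩, odd_one, by omega, by omega,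
      by omega, by push_cast; linear_combination -hzero,
      by push_cast; linear_combination -2 * hzero⟩
  · have hzero : ((6 * q + 5 : ℕ) : Fin n) = 0 := by rw [Fin.natCast_eq_zero, ← hq]
    push_cast at hzero
    refine ⟨1, 2 * q + 3, 4 * q + 5, odd_one, ⟨q + 1, by ring⟩, ⟨2 * q + 2, by ring⟩, by omega,
      by omega, by omega, by push_cast; linear_combination hzero,
      by push_cast; linear_combination 2 * hzero⟩

lemma setOf_mem_and_add_three_mem_ne_singleton (hodd : Odd n) (hn : 7 ≤ n)
    (hA : ∀ x, x ∈ C ∨ x + 3 ∈ C) (hB : ∀ x, x ∈ C ∨ x + 1 ∈ C ∨ x + 2 ∈ C) (x₀ : Fin n) :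
    {x | x ∈ C ∧ x + 3 ∈ C} ≠ {x₀} := by
  intro hT
  have hstep (x : Fin n) (hx : x ≠ x₀) : x + 3 ∈ C ↔ x ∉ C := by
    have hnot : ¬ (x ∈ C ∧ x + 3 ∈ C) := fun h ↦ hx (hT.subset h)
    have := hA x
    tauto
  by_cases h3 : 3 ∣ n
  · have havoid : ∀ j < n, x₀ + 1 + j • 3 ≠ x₀ := by
      intro j _ h
      rw [nsmul_eq_mul] at h
      have : ((1 + 3 * j : ℕ) : Fin n) = 0 := by
        push_cast
        linear_combination h
      rw [Fin.natCast_eq_zero] at this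
      have := h3.trans this
      omega
    have := mem_add_nsmul_iff_even hstep havoid n le_rfl
    rw [nsmul_eq_mul, Fin.natCast_self, zero_mul, add_zero] at this
    exact Nat.not_even_iff_odd.2 hodd (by tauto)
  · have hcop : Nat.Coprime n 3 := ((Nat.Prime.coprime_iff_not_dvd Nat.prime_three).2 h3).symm
    have havoid : ∀ j < n - 1, x₀ + 3 + j • 3 ≠ x₀ := by
      intro j hj h
      rw [nsmul_eq_mul] at h
      have : (((j + 1) * 3 : ℕ) : Fin n) = 0 := by
        push_cast
        linear_combination h
      rw [Fin.natCast_eq_zero] at this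
      have := Nat.le_of_dvd (by omega) (hcop.dvd_of_dvd_mul_right this)
      omega
    have hx₀ : x₀ + 3 ∈ C := (hT.symm.subset (Set.mem_singleton x₀)).2
    have hnotMem (j : ℕ) (hj : j < n) (hodd : Odd j) : x₀ + 3 + j • 3 ∉ C := by
      rw [mem_add_nsmul_iff_even hstep havoid j (by omega)]
      simpa [hx₀] using Nat.not_even_iff_odd.2 hodd
    obtain ⟨i, j, k, hi, hj, hk, hin, hjn, hkn, hij, hik⟩ :=
      exists_odd_nsmul_three_add_one_add_two hodd h3 hn
    rcases hB (x₀ + 3 + i • 3) with h | h | h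
    · exact hnotMem i hin hi h
    · exact hnotMem j hjn hj (by rwa [hij, ← add_assoc])
    · exact hnotMem k hkn hk (by rwa [hik, ← add_assoc])

lemma add_three_div_two_le_ncard_of_isIdCode (hodd : Odd n) (hn : 7 ≤ n) (hC : IsIdCode G C) :
    (n + 3) / 2 ≤ C.ncard := by
  obtain ⟨hA, hB⟩ := (isIdCode_cycleGraph_iff (by omega)).1 hC
  have hcount := two_mul_ncard_eq_card_add_ncard hA
  have hT : {x | x ∈ C ∧ x + 3 ∈ C}.ncard ≠ 1 := by
    rw [Ne, Set.ncard_eq_one]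
    rintro ⟨x₀, hx₀⟩
    exact setOf_mem_and_add_three_mem_ne_singleton hodd hn hA hB x₀ hx₀
  rw [Nat.card_fin] at hcount
  obtain ⟨w, rfl⟩ := hodd
  omega

lemma exists_isIdCode_cycleGraph_ncard_le (hodd : Odd n) (hn : 5 ≤ n) :
    ∃ C : Set (Fin n), IsIdCode G C ∧ C.ncard ≤ (n + 3) / 2 := by
  -- the even vertices, and `1 = 2 * ((n + 1) / 2)`
  set C := Set.range fun i : Fin ((n + 3) / 2) ↦ ((2 * i : ℕ) : Fin n)
  have hn2 : n % 2 = 1 := Nat.odd_iff.1 hodd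
  have hmem (x : Fin n) (hx : x.val % 2 = 0 ∨ x.val = 1) : x ∈ C := by
    have := x.isLt
    obtain ⟨i, hi, hix⟩ : ∃ i < (n + 3) / 2, 2 * i % n = x.val := by
      rcases hx with hx | hx
      · exact ⟨x.val / 2, by omega, by rw [Nat.mod_eq_of_lt (by omega)]; omega⟩
      · refine ⟨(n + 1) / 2, by omega, ?_⟩
        rw [hx, show 2 * ((n + 1) / 2) = 1 + n by omega, Nat.add_mod_right,
          Nat.mod_eq_of_lt (by omega)]
    exact ⟨⟨i, hi⟩, Fin.ext ((Fin.val_natCast _ _).trans hix)⟩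
  have hval1 : ((1 : Fin n) : ℕ) = 1 := by simp [Nat.mod_eq_of_lt (show 1 < n by omega)]
  have hval3 : ((3 : Fin n) : ℕ) = 3 := by simp [Nat.mod_eq_of_lt (show 3 < n by omega)]
  refine ⟨C, (isIdCode_cycleGraph_iff hn).2 ⟨fun x ↦ ?_, fun x ↦ ?_⟩, ?_⟩
  · have := x.isLt
    by_cases hx : x.val % 2 = 0 ∨ x.val = 1
    · exact .inl (hmem x hx)
    · refine .inr (hmem _ ?_)
      rw [Fin.val_add_eq_ite, hval3]
      split_ifs <;> omega
  · have := x.isLt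
    by_cases hx : x.val % 2 = 0 ∨ x.val = 1
    · exact .inl (hmem x hx)
    · refine .inr (.inl (hmem _ ?_))
      rw [Fin.val_add_eq_ite, hval1]
      split_ifs <;> omega
  · calc C.ncard = Nat.card C := (Nat.card_coe_set_eq C).symm
      _ ≤ Nat.card (Fin ((n + 3) / 2)) := Finite.card_range_le _
      _ = (n + 3) / 2 := Nat.card_fin _

end CycleGraph

theorem stmt_9 (n : ℕ) (hodd : Odd n) (hn : 7 ≤ n) :
    gammaID (SimpleGraph.cycleGraph n) = (n + 3) / 2 := by
  have : NeZero n := ⟨by omega⟩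
  obtain ⟨C₀, hC₀, hcard⟩ := exists_isIdCode_cycleGraph_ncard_le hodd (by omega)
  refine IsLeast.csInf_eq ⟨⟨C₀, hC₀, le_antisymm hcard ?_⟩, ?_⟩
  · exact add_three_div_two_le_ncard_of_isIdCode hodd hn hC₀
  · rintro _ ⟨C, hC, rfl⟩
    exact add_three_div_two_le_ncard_of_isIdCode hodd hn hC
end

section
/- For every odd integer n = 2k+1 >= 7 and every non-edge e of the cycle C_n, the graph C_n + e (the cycle with chord e added) admits an identifying code of size at most k + 1. -/
open SimpleGraph

/-!
Rotating the cycle, the chord becomes `{0, d}` with `d` even: as `n` is odd, exactly one of the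
two arcs between the endpoints has even length. Non-adjacency gives `2 ≤ d ≤ n - 3`.

For `d ≥ 4` the `k + 1` even vertices form an identifying code. On `C_n` alone, the only collision
is between `0` and `n - 1`, which both see `{0, n - 1}`, and the chord adds `d` to the trace of `0`.
For `d = 2` the even vertices fail, since `1` and `2` both see `{0, 2}`. In that case,
`(evens \ {0}) ∪ {3}` is used instead.

Everything is reduced to arithmetic on the labels `0, …, n - 1`. Two vertices `x < y` with equal
traces are then refuted by evaluating the traces at a few code vertices next to `x` and `y`.
-/

section IdCode

variable {V W : Type*} {G : SimpleGraph V} {G' : SimpleGraph W}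

lemma SimpleGraph.Iso.image_cnbr (φ : G ≃g G') (v : V) : φ '' cnbr G v = cnbr G' (φ v) := by
  ext w
  obtain ⟨w, rfl⟩ := φ.surjective w
  simp [cnbr, φ.injective.mem_set_image, φ.injective.eq_iff, φ.map_adj_iff]

lemma IsIdCode.image {C : Set V} (h : IsIdCode G C) (φ : G ≃g G') : IsIdCode G' (φ '' C) := by
  have trace (v : V) : cnbr G' (φ v) ∩ φ '' C = φ '' (cnbr G v ∩ C) := by
    rw [Set.image_inter φ.injective, Iso.image_cnbr]
  refine ⟨fun w ↦ ?_, fun w w' hww' ↦ ?_⟩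
  · obtain ⟨v, rfl⟩ := φ.surjective w
    rw [trace]
    exact (h.1 v).image φ
  · obtain ⟨v, rfl⟩ := φ.surjective w
    obtain ⟨v', rfl⟩ := φ.surjective w'
    rw [trace, trace, Set.image_eq_image φ.injective] at hww'
    rw [h.2 v v' hww']

lemma mem_cnbr_sup_edge {a b x y : V} :
    y ∈ cnbr (G ⊔ edge a b) x ↔ y ∈ cnbr G x ∨ (x = a ∧ y = b) ∨ (x = b ∧ y = a) := by
  simp only [cnbr, Set.mem_insert_iff, mem_neighborSet, sup_adj, edge_adj]
  grind

end IdCode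

section Cycle

variable {n : ℕ}

lemma Fin.val_sub_eq_one_iff (hn : 2 ≤ n) {x y : Fin n} :
    (x - y).val = 1 ↔ x.val = y.val + 1 ∨ (x.val = 0 ∧ y.val + 1 = n) := by
  rcases le_or_gt y x with h | h
  · rw [Fin.coe_sub_iff_le.2 h]
    have := Fin.le_def.1 h
    omega
  · rw [Fin.coe_sub_iff_lt.2 h]
    have := Fin.lt_def.1 h
    omega

lemma Fin.val_sub_add_val_sub {x y : Fin n} (hxy : x ≠ y) : (x - y).val + (y - x).val = n := by
  rcases lt_or_gt_of_ne hxy with h | h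
  · rw [Fin.coe_sub_iff_lt.2 h, Fin.coe_sub_iff_le.2 h.le]
    have := Fin.lt_def.1 h
    omega
  · rw [Fin.coe_sub_iff_le.2 h.le, Fin.coe_sub_iff_lt.2 h]
    have := Fin.lt_def.1 h
    omega

lemma mem_cnbr_cycleGraph (hn : 2 ≤ n) {x y : Fin n} :
    y ∈ cnbr (cycleGraph n) x ↔ y.val = x.val ∨ y.val = x.val + 1 ∨ x.val = y.val + 1 ∨
      (x.val + 1 = n ∧ y.val = 0) ∨ (y.val + 1 = n ∧ x.val = 0) := by
  rw [cnbr, Set.mem_insert_iff, mem_neighborSet, cycleGraph_adj', Fin.val_sub_eq_one_iff hn,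
    Fin.val_sub_eq_one_iff hn, Fin.ext_iff]
  omega

def chordNbhd (n d x m : ℕ) : Prop :=
  m = x ∨ m = x + 1 ∨ x = m + 1 ∨ (x + 1 = n ∧ m = 0) ∨ (m + 1 = n ∧ x = 0) ∨
    (x = 0 ∧ m = d) ∨ (x = d ∧ m = 0)

variable [NeZero n]

lemma mem_cnbr_cycleGraph_sup_edge_zero (hn : 2 ≤ n) {d x y : Fin n} :
    y ∈ cnbr (cycleGraph n ⊔ edge 0 d) x ↔ chordNbhd n d x y := by
  rw [mem_cnbr_sup_edge, mem_cnbr_cycleGraph hn, chordNbhd, Fin.ext_iff, Fin.ext_iff,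
    Fin.ext_iff, Fin.ext_iff, Fin.val_zero]
  omega

lemma isIdCode_cycleGraph_sup_edge_zero (hn : 2 ≤ n) {d : Fin n} {C : Set (Fin n)}
    {p : ℕ → Prop} (hC : ∀ x : Fin n, x ∈ C ↔ p x)
    (hdom : ∀ x < n, ∃ m < n, p m ∧ chordNbhd n d x m)
    (hsep : ∀ x y, x < y → y < n →
      (∀ m < n, p m → (chordNbhd n d x m ↔ chordNbhd n d y m)) → False) :
    IsIdCode (cycleGraph n ⊔ edge 0 d) C := by
  refine ⟨fun x ↦ ?_, fun x y hxy ↦ ?_⟩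
  · obtain ⟨m, hm, hpm, hxm⟩ := hdom x x.isLt
    exact ⟨⟨m, hm⟩, (mem_cnbr_cycleGraph_sup_edge_zero hn).2 hxm, (hC _).2 hpm⟩
  · have htrace : ∀ m < n, p m → (chordNbhd n d x m ↔ chordNbhd n d y m) := fun m hm hpm ↦ by
      simpa only [Set.mem_inter_iff, mem_cnbr_cycleGraph_sup_edge_zero hn, hC, and_iff_left hpm]
        using Set.ext_iff.1 hxy ⟨m, hm⟩
    by_contra hne
    rcases lt_or_gt_of_ne (Fin.val_ne_of_ne hne) with h | h
    · exact hsep x y h y.isLt htrace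
    · exact hsep y x h x.isLt fun m hm hpm ↦ (htrace m hm hpm).symm

def supEdgeIsoAddLeft (c d : Fin n) :
    (cycleGraph n ⊔ edge 0 d) ≃g (cycleGraph n ⊔ edge c (c + d)) where
  toEquiv := Equiv.addLeft c
  map_rel_iff' := by simp [cycleGraph_adj', edge_adj]

lemma exists_edge_eq_edge_add (hn : Odd n) {u v : Fin n} (huv : u ≠ v)
    (hadj : ¬(cycleGraph n).Adj u v) :
    ∃ a d : Fin n, edge u v = edge a (a + d) ∧ Even d.val ∧ 2 ≤ d.val ∧ d.val + 3 ≤ n := by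
  have hsum := Fin.val_sub_add_val_sub huv
  have hne : (v - u).val ≠ 0 := Fin.val_ne_zero_iff.2 (sub_ne_zero.2 huv.symm)
  rw [cycleGraph_adj'] at hadj
  rw [Nat.odd_iff] at hn
  rcases Nat.even_or_odd (v - u).val with h | h
  · refine ⟨u, v - u, by rw [add_sub_cancel], h, ?_⟩
    rw [Nat.even_iff] at h
    omega
  · refine ⟨v, u - v, by rw [add_sub_cancel, edge_comm], ?_⟩
    rw [Nat.odd_iff] at h
    rw [Nat.even_iff]
    omega

end Cycle
section Codes

variable {n : ℕ}

def evenVerts (n : ℕ) : Set (Fin n) := {x | Even x.val}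

lemma ncard_evenVerts_le {k : ℕ} (hnk : n = 2 * k + 1) : (evenVerts n).ncard ≤ k + 1 := by
  have hhalf : ∀ x : Fin n, x.val / 2 < k + 1 := fun x ↦ by have := x.isLt; omega
  calc (evenVerts n).ncard ≤ (Set.univ : Set (Fin (k + 1))).ncard :=
        Set.ncard_le_ncard_of_injOn (fun x ↦ ⟨x.val / 2, hhalf x⟩) (fun _ _ ↦ trivial)
          (fun x hx y hy hxy ↦ by
            rw [evenVerts, Set.mem_ofPred_eq, Nat.even_iff] at hx hy
            simp only [Fin.mk.injEq] at hxy
            omega)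
    _ = k + 1 := by simp

lemma ncard_insert_evenVerts_diff_zero_le [NeZero n] {k : ℕ} (hnk : n = 2 * k + 1) (t : Fin n) :
    (insert t (evenVerts n \ {0})).ncard ≤ k + 1 := by
  have hzero : (0 : Fin n) ∈ evenVerts n := by simp [evenVerts]
  have := ncard_evenVerts_le hnk
  have := Set.ncard_sdiff_singleton_of_mem hzero
  have := Set.ncard_insert_le t (evenVerts n \ {0})
  omega

variable [NeZero n]

theorem isIdCode_evenVerts (hn : Odd n) {d : Fin n} (hd : Even d.val) (hd4 : 4 ≤ d.val)
    (hdn : d.val + 3 ≤ n) : IsIdCode (cycleGraph n ⊔ edge 0 d) (evenVerts n) := by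
  rw [Nat.odd_iff] at hn
  rw [Nat.even_iff] at hd
  refine isIdCode_cycleGraph_sup_edge_zero (by omega) (p := (· % 2 = 0))
    (fun x ↦ Nat.even_iff) (fun x hx ↦ ⟨x + x % 2, by omega, by omega, by unfold chordNbhd; omega⟩)
    fun x y hxy hy h ↦ ?_
  unfold chordNbhd at h
  rcases Nat.mod_two_eq_zero_or_one x with hx | hx
  · have hyx := (h x (by omega) hx).1 (by omega)
    obtain rfl | ⟨rfl, rfl | rfl⟩ : y = x + 1 ∨ x = 0 ∧ (y + 1 = n ∨ y = d) := by omega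
    · have := (h (x + 2) (by omega) (by omega)).2 (by omega)
      omega
    · have := (h d (by omega) hd).1 (by omega)
      omega
    · have := (h (n - 1) (by omega) (by omega)).1 (by omega)
      omega
  · have h1 := (h (x + 1) (by omega) (by omega)).1 (by omega)
    have h2 := (h (x - 1) (by omega) (by omega)).1 (by omega)
    omega

theorem isIdCode_insert_three (hn : Odd n) (hn7 : 7 ≤ n) {d : Fin n} (hd : d.val = 2) :
    IsIdCode (cycleGraph n ⊔ edge 0 d) (insert ⟨3, by omega⟩ (evenVerts n \ {0})) := by
  rw [Nat.odd_iff] at hn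
  refine isIdCode_cycleGraph_sup_edge_zero (by omega) (p := fun m ↦ m % 2 = 0 ∧ m ≠ 0 ∨ m = 3)
    (fun x ↦ ?_) (fun x hx ↦ ?_) fun x y hxy hy h ↦ ?_
  · simp only [evenVerts, Set.mem_insert_iff, Set.mem_sdiff, Set.mem_ofPred_eq,
      Set.mem_singleton_iff, Fin.ext_iff, Fin.val_zero, Nat.even_iff]
    omega
  · by_cases hx0 : x = 0
    · exact ⟨2, by omega, by omega, by unfold chordNbhd; omega⟩
    · exact ⟨x + x % 2, by omega, by omega, by unfold chordNbhd; omega⟩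
  unfold chordNbhd at h
  rw [hd] at h
  by_cases hx0 : x = 0
  · have h1 := (h 2 (by omega) (by omega)).1 (by omega)
    have h2 := (h (n - 1) (by omega) (by omega)).1 (by omega)
    omega
  by_cases hxC : x % 2 = 0 ∨ x = 3
  · have hyx := (h x (by omega) (by omega)).1 (by omega)
    obtain rfl : y = x + 1 := by omega
    by_cases hx3 : x = 3
    · have := (h 2 (by omega) (by omega)).1 (by omega)
      omega
    · have := (h (x + 2) (by omega) (by omega)).2 (by omega)
      omega
  · have hyx := (h (x + 1) (by omega) (by omega)).1 (by omega)
    by_cases hx1 : x = 1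
    · have := (h (y + 1) (by omega) (by omega)).2 (by omega)
      omega
    · have := (h (x - 1) (by omega) (by omega)).1 (by omega)
      omega

lemma exists_isIdCode_cycleGraph_sup_edge_zero {k : ℕ} (hnk : n = 2 * k + 1) (hn : 7 ≤ n)
    {d : Fin n} (hd : Even d.val) (hd2 : 2 ≤ d.val) (hdn : d.val + 3 ≤ n) :
    ∃ C, IsIdCode (cycleGraph n ⊔ edge 0 d) C ∧ C.ncard ≤ k + 1 := by
  have hodd : Odd n := ⟨k, hnk⟩
  rcases eq_or_lt_of_le hd2 with h2 | h2
  · exact ⟨_, isIdCode_insert_three hodd hn h2.symm, ncard_insert_evenVerts_diff_zero_le hnk _⟩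
  · have hd4 : 4 ≤ d.val := by rw [Nat.even_iff] at hd; omega
    exact ⟨_, isIdCode_evenVerts hodd hd hd4 hdn, ncard_evenVerts_le hnk⟩

end Codes

theorem stmt_13 (n k : ℕ) (hnk : n = 2 * k + 1) (hn : 7 ≤ n)
    (u v : Fin n) (huv : u ≠ v) (hna : ¬ (SimpleGraph.cycleGraph n).Adj u v) :
    ∃ C : Set (Fin n),
      IsIdCode (SimpleGraph.cycleGraph n ⊔ SimpleGraph.edge u v) C ∧
      C.ncard ≤ k + 1 := by
  have : NeZero n := ⟨by omega⟩
  obtain ⟨a, d, hedge, hd, hd2, hdn⟩ := exists_edge_eq_edge_add ⟨k, hnk⟩ huv hna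
  obtain ⟨C, hC, hcard⟩ := exists_isIdCode_cycleGraph_sup_edge_zero hnk hn hd hd2 hdn
  let φ := supEdgeIsoAddLeft a d
  rw [hedge]
  exact ⟨φ '' C, hC.image φ, by rwa [Set.ncard_image_of_injective C φ.injective]⟩
end

section
/- Let n >= 6 be even and let G be obtained from the cycle C_n with vertices v_1, ..., v_n (in cyclic order) by adding a chord between two non-consecutive vertices. If the chord joins two vertices of even index, then the set of vertices of odd index is an identifying code of G of size n/2; symmetrically if the chord joins two odd-index vertices, the even-index vertices form an identifying code; and if the chord joins an even-index and an odd-index vertex, both the even-index set and the odd-index set are identifying codes of G. -/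
/-!
Each parity class `C` of the even cycle is independent, and every vertex outside `C` sees its
two cycle neighbours, both in `C`. If the chord has an endpoint `j ∉ C`, it neither joins two
vertices of `C` nor adds a vertex of `C` to any trace except that of `j`. So every vertex `u ∉ C`,
`u ≠ j`, has trace exactly `{u - 1, u + 1}`, and such a pair determines `u` as soon as `4 ≠ 0`
modulo `n`, i.e. for `n ≥ 6`. The two classes have the same size because `v ↦ v + 1` swaps them.
-/

open SimpleGraph

section IndepSet

variable {V : Type*} {G : SimpleGraph V} {C : Set V}

theorem cnbr_inter_of_mem (hC : G.IsIndepSet C) {v : V} (hv : v ∈ C) :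
    cnbr G v ∩ C = {v} := by
  have hnbr : G.neighborSet v ∩ C = ∅ :=
    Set.eq_empty_of_forall_notMem fun w ⟨hvw, hw⟩ => hC hv hw (G.ne_of_adj hvw) hvw
  rw [cnbr, Set.insert_inter_of_mem hv, hnbr, insert_empty_eq]

theorem cnbr_inter_of_notMem {v : V} (hv : v ∉ C) : cnbr G v ∩ C = G.neighborSet v ∩ C :=
  Set.insert_inter_of_notMem hv

theorem isIdCode_of_isIndepSet (hC : G.IsIndepSet C)
    (hdom : ∀ v ∉ C, (G.neighborSet v ∩ C).Nontrivial)
    (hsep : Set.InjOn (fun v => G.neighborSet v ∩ C) Cᶜ) : IsIdCode G C := by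
  have htrace : ∀ v ∉ C, (cnbr G v ∩ C).Nontrivial := fun v hv =>
    cnbr_inter_of_notMem hv ▸ hdom v hv
  refine ⟨fun v => ?_, fun u v huv => ?_⟩
  · by_cases hv : v ∈ C
    · exact cnbr_inter_of_mem hC hv ▸ Set.singleton_nonempty v
    · exact (htrace v hv).nonempty
  by_cases hu : u ∈ C <;> by_cases hv : v ∈ C
  · simpa [cnbr_inter_of_mem hC hu, cnbr_inter_of_mem hC hv] using huv
  · exact absurd (huv ▸ htrace v hv) (cnbr_inter_of_mem hC hu ▸ Set.not_nontrivial_singleton)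
  · exact absurd (huv ▸ htrace u hu) (cnbr_inter_of_mem hC hv ▸ Set.not_nontrivial_singleton)
  · rw [cnbr_inter_of_notMem hu, cnbr_inter_of_notMem hv] at huv
    exact hsep hu hv huv

end IndepSet

theorem eq_of_sub_one_add_one {R : Type*} [CommRing R] (h4 : (4 : R) ≠ 0) {a b : R}
    (h₁ : a - 1 = b - 1 ∨ a - 1 = b + 1) (h₂ : a + 1 = b - 1 ∨ a + 1 = b + 1) : a = b := by
  rcases h₁ with h₁ | h₁
  · exact sub_left_injective h₁
  rcases h₂ with h₂ | h₂
  · exact absurd (by linear_combination h₂ - h₁) h4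
  · exact add_left_injective 1 h₂

theorem sub_one_ne_add_one {R : Type*} [CommRing R] (h2 : (2 : R) ≠ 0) (a : R) :
    a - 1 ≠ a + 1 :=
  fun h => h2 (by linear_combination -h)

namespace Fin

variable {n : ℕ} [NeZero n]

theorem val_add_one_mod_two (heven : Even n) (v : Fin n) :
    (v + 1).val % 2 = (v.val + 1) % 2 := by
  rw [val_add, val_one', Nat.mod_mod_of_dvd _ heven.two_dvd, Nat.add_mod,
    Nat.mod_mod_of_dvd _ heven.two_dvd, ← Nat.add_mod]

theorem val_sub_one_mod_two (heven : Even n) (v : Fin n) :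
    (v - 1).val % 2 = (v.val + 1) % 2 := by
  have := val_add_one_mod_two heven (v - 1)
  rw [sub_add_cancel] at this
  omega

end Fin

section CycleWithChord

variable {n : ℕ} [NeZero n] {i j : Fin n}

theorem cycleGraph_sup_edge_adj (hn : 2 ≤ n) {v w : Fin n} :
    (cycleGraph n ⊔ edge i j).Adj v w ↔ w = v - 1 ∨ w = v + 1 ∨ (edge i j).Adj v w := by
  obtain ⟨m, rfl⟩ : ∃ m, n = m + 2 := ⟨n - 2, by omega⟩
  rw [sup_adj, ← mem_neighborSet, cycleGraph_neighborSet, Set.mem_insert_iff,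
    Set.mem_singleton_iff, or_assoc]

theorem isIndepSet_cycleGraph_sup_edge (hn : 2 ≤ n) (heven : Even n) {c : ℕ}
    (hj : j.val % 2 ≠ c) :
    (cycleGraph n ⊔ edge i j).IsIndepSet {v | v.val % 2 = c} := by
  intro u (hu : u.val % 2 = c) w (hw : w.val % 2 = c) _ hadj
  rcases (cycleGraph_sup_edge_adj hn).1 hadj with rfl | rfl | hedge
  · have := Fin.val_sub_one_mod_two heven u; omega
  · have := Fin.val_add_one_mod_two heven u; omega
  · obtain ⟨⟨rfl, rfl⟩ | ⟨rfl, rfl⟩, -⟩ := (edge_adj ..).1 hedge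
    exacts [hj hw, hj hu]

theorem sub_one_add_one_mem_neighborSet_inter (hn : 2 ≤ n) (heven : Even n) {c : ℕ}
    (hc : c < 2) {v : Fin n} (hv : v.val % 2 ≠ c) :
    v - 1 ∈ (cycleGraph n ⊔ edge i j).neighborSet v ∩ {v | v.val % 2 = c} ∧
      v + 1 ∈ (cycleGraph n ⊔ edge i j).neighborSet v ∩ {v | v.val % 2 = c} := by
  have hsub := Fin.val_sub_one_mod_two heven v
  have hadd := Fin.val_add_one_mod_two heven v
  refine ⟨⟨(cycleGraph_sup_edge_adj hn).2 (.inl rfl), ?_⟩,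
    ⟨(cycleGraph_sup_edge_adj hn).2 (.inr (.inl rfl)), ?_⟩⟩ <;>
  · simp only [Set.mem_ofPred_eq]; omega

theorem eq_sub_one_or_eq_add_one_of_mem (hn : 2 ≤ n) {c : ℕ} (hj : j.val % 2 ≠ c)
    {v w : Fin n} (hvj : v ≠ j)
    (hw : w ∈ (cycleGraph n ⊔ edge i j).neighborSet v ∩ {v | v.val % 2 = c}) :
    w = v - 1 ∨ w = v + 1 := by
  obtain ⟨hvw, hwc : w.val % 2 = c⟩ := hw
  rcases (cycleGraph_sup_edge_adj hn).1 hvw with h | h | hedge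
  · exact .inl h
  · exact .inr h
  · obtain ⟨⟨-, rfl⟩ | ⟨rfl, -⟩, -⟩ := (edge_adj ..).1 hedge
    exacts [absurd hwc hj, absurd rfl hvj]

open Fin.CommRing in
theorem injOn_neighborSet_inter_cycleGraph_sup_edge (hn : 4 < n) (heven : Even n) {c : ℕ}
    (hc : c < 2) (hj : j.val % 2 ≠ c) :
    Set.InjOn (fun v => (cycleGraph n ⊔ edge i j).neighborSet v ∩ {v | v.val % 2 = c})
      {v | v.val % 2 = c}ᶜ := by
  intro u (hu : u.val % 2 ≠ c) v (hv : v.val % 2 ≠ c) (huv : _ ∩ _ = _ ∩ _)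
  wlog hvj : v ≠ j generalizing u v
  · by_cases huj : u = j
    · exact huj.trans (not_not.1 hvj).symm
    · exact (this hv hu huv.symm huj).symm
  have h4 : (4 : Fin n) ≠ 0 := by
    rw [Ne, Fin.ext_iff, Fin.coe_ofNat_eq_mod, Nat.mod_eq_of_lt (by omega)]
    simp
  obtain ⟨hsub, hadd⟩ := sub_one_add_one_mem_neighborSet_inter (i := i) (by omega) heven hc hu
  exact eq_of_sub_one_add_one h4 (eq_sub_one_or_eq_add_one_of_mem (by omega) hj hvj (huv ▸ hsub))
    (eq_sub_one_or_eq_add_one_of_mem (by omega) hj hvj (huv ▸ hadd))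

open Fin.CommRing in
theorem nontrivial_neighborSet_inter_cycleGraph_sup_edge (hn : 3 ≤ n) (heven : Even n) {c : ℕ}
    (hc : c < 2) {v : Fin n} (hv : v.val % 2 ≠ c) :
    ((cycleGraph n ⊔ edge i j).neighborSet v ∩ {v | v.val % 2 = c}).Nontrivial := by
  have h2 : (2 : Fin n) ≠ 0 := by
    rw [Ne, Fin.ext_iff, Fin.coe_ofNat_eq_mod, Nat.mod_eq_of_lt (by omega)]
    simp
  obtain ⟨hsub, hadd⟩ := sub_one_add_one_mem_neighborSet_inter (i := i) (by omega) heven hc hv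
  exact ⟨_, hsub, _, hadd, sub_one_ne_add_one h2 v⟩

theorem isIdCode_cycleGraph_sup_edge (hn : 4 < n) (heven : Even n) {c : ℕ} (hc : c < 2)
    (hj : j.val % 2 ≠ c) :
    IsIdCode (cycleGraph n ⊔ edge i j) {v | v.val % 2 = c} :=
  isIdCode_of_isIndepSet (isIndepSet_cycleGraph_sup_edge (by omega) heven hj)
    (fun _ hv => nontrivial_neighborSet_inter_cycleGraph_sup_edge (by omega) heven hc hv)
    (injOn_neighborSet_inter_cycleGraph_sup_edge hn heven hc hj)

end CycleWithChord

theorem ncard_val_mod_two_zero_eq_one (n : ℕ) [NeZero n] (heven : Even n) :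
    {v : Fin n | v.val % 2 = 0}.ncard = {v : Fin n | v.val % 2 = 1}.ncard := by
  rw [← Set.ncard_preimage_of_injective_subset_range (f := fun v : Fin n => v + 1)
    (add_left_injective 1) (fun v _ => ⟨v - 1, sub_add_cancel v 1⟩)]
  congr 1
  ext v
  simp only [Set.mem_preimage, Set.mem_ofPred_eq, Fin.val_add_one_mod_two heven]
  omega

theorem ncard_val_mod_two_zero_add_one (n : ℕ) :
    {v : Fin n | v.val % 2 = 0}.ncard + {v : Fin n | v.val % 2 = 1}.ncard = n := by
  have hunion : {v : Fin n | v.val % 2 = 0} ∪ {v | v.val % 2 = 1} = Set.univ := by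
    ext v; simp only [Set.mem_union, Set.mem_ofPred_eq, Set.mem_univ, iff_true]; omega
  rw [← Set.ncard_union_eq, hunion, Set.ncard_univ, Nat.card_eq_fintype_card, Fintype.card_fin]
  exact Set.disjoint_left.mpr fun v h₀ h₁ => by simp_all

theorem stmt_16_general (n : ℕ) (hn : 6 ≤ n) (heven : Even n) (i j : Fin n) :
    let G := SimpleGraph.cycleGraph n ⊔ SimpleGraph.edge i j
    let Vodd : Set (Fin n) := {v | v.val % 2 = 0}
    let Veven : Set (Fin n) := {v | v.val % 2 = 1}
    Vodd.ncard = n / 2 ∧ Veven.ncard = n / 2 ∧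
    ((i.val % 2 = 1 ∧ j.val % 2 = 1) → IsIdCode G Vodd) ∧
    ((i.val % 2 = 0 ∧ j.val % 2 = 0) → IsIdCode G Veven) ∧
    (i.val % 2 ≠ j.val % 2 → IsIdCode G Vodd ∧ IsIdCode G Veven) := by
  dsimp only
  have : NeZero n := ⟨by omega⟩
  have hsame := ncard_val_mod_two_zero_eq_one n heven
  have hsum := ncard_val_mod_two_zero_add_one n
  have hcode {c : ℕ} (hc : c < 2) {a b : Fin n} (hb : b.val % 2 ≠ c) :
      IsIdCode (cycleGraph n ⊔ edge a b) {v | v.val % 2 = c} :=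
    isIdCode_cycleGraph_sup_edge (by omega) heven hc hb
  refine ⟨by omega, by omega, fun ⟨_, hj⟩ => hcode (by omega) (by omega),
    fun ⟨_, hj⟩ => hcode (by omega) (by omega), fun hij => ?_⟩
  rcases Nat.mod_two_eq_zero_or_one j.val with hj | hj
  · exact ⟨edge_comm j i ▸ hcode (by omega) (by omega), hcode (by omega) (by omega)⟩
  · exact ⟨hcode (by omega) (by omega), edge_comm j i ▸ hcode (by omega) (by omega)⟩

/-- Vertex `i : Fin n` stands for `v_{i+1}`, so `v_k` has odd index iff `i.val % 2 = 0`. -/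
theorem stmt_16 (n : ℕ) (hn : 6 ≤ n) (heven : Even n) (i j : Fin n)
    (hij : i ≠ j) (hnadj : ¬ (SimpleGraph.cycleGraph n).Adj i j) :
    let G := SimpleGraph.cycleGraph n ⊔ SimpleGraph.edge i j
    let Vodd : Set (Fin n) := {v | v.val % 2 = 0}
    let Veven : Set (Fin n) := {v | v.val % 2 = 1}
    Vodd.ncard = n / 2 ∧ Veven.ncard = n / 2 ∧
    ((i.val % 2 = 1 ∧ j.val % 2 = 1) → IsIdCode G Vodd) ∧
    ((i.val % 2 = 0 ∧ j.val % 2 = 0) → IsIdCode G Veven) ∧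
    (i.val % 2 ≠ j.val % 2 → IsIdCode G Vodd ∧ IsIdCode G Veven) :=
  stmt_16_general n hn heven i j
end

section
/- Let G be a connected identifiable graph of order n >= 3 with maximum degree Δ >= 3, and suppose that deleting some set of t edges from G yields a triangle-free graph. Assuming that every connected identifiable triangle-free graph H of order at least 3 with maximum degree at most Δ satisfies γ^ID(H) <= ((Δ-1)/Δ)·|V(H)| + 1/Δ, it follows that γ^ID(G) <= ((Δ-1)/Δ)·n + 4t + 1/Δ. -/
open SimpleGraph

/-!
Choose an inclusion-minimal `S ⊆ E'` whose deletion leaves `G` triangle-free. By minimality every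
edge of `S` closes a triangle with the other edges of `G - S`, so `G - S` is still connected; being
triangle-free on at least three vertices it is identifiable, and the hypothesis bounds its
identifying code number. An optimal code of `G - S` still dominates `G` and still separates all
vertices not incident to `S`, so on `G` its traces take at least `n - 2|S|` distinct values.
Adding a vertex that separates two vertices with equal trace increases the number of traces, so
at most `2|S|` further vertices turn it into an identifying code of `G`.
-/

theorem Set.ncard_image_lt_of_not_injOn {α β : Type*} {f : α → β} {s : Set α} (hs : s.Finite)
    (hf : ¬ Set.InjOn f s) : (f '' s).ncard < s.ncard :=
  (Set.ncard_image_le hs).lt_of_ne fun h => hf (Set.injOn_of_ncard_image_eq h hs)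

section

variable {V : Type*}

def Identifiable (G : SimpleGraph V) : Prop :=
  ∀ a b : V, cnbr G a = cnbr G b → a = b

def traces (G : SimpleGraph V) (C : Set V) : Set (Set V) :=
  Set.range fun v => cnbr G v ∩ C

section IdentifyingCodes

variable {G H : SimpleGraph V}

theorem cnbr_mono (h : G ≤ H) (v : V) : cnbr G v ⊆ cnbr H v :=
  Set.insert_subset_insert (neighborSet_mono h v)

theorem cnbr_deleteEdges_of_forall_notMem {S : Set (Sym2 V)} {v : V} (hv : ∀ e ∈ S, v ∉ e) :
    cnbr (G.deleteEdges S) v = cnbr G v := by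
  ext x
  simp only [cnbr, Set.mem_insert_iff, mem_neighborSet, deleteEdges_adj]
  exact or_congr_right ⟨And.left, fun h => ⟨h, fun he => hv _ he (Sym2.mem_mk_left v x)⟩⟩

theorem isIdCode_univ (hG : Identifiable G) : IsIdCode G Set.univ :=
  ⟨fun v => ⟨v, Set.mem_insert v _, Set.mem_univ v⟩, fun u v h => hG u v (by simpa using h)⟩

theorem gammaID_le {C : Set V} (hC : IsIdCode G C) : gammaID G ≤ C.ncard :=
  Nat.sInf_le ⟨C, hC, rfl⟩

theorem exists_isIdCode_ncard_eq_gammaID (hG : Identifiable G) :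
    ∃ C, IsIdCode G C ∧ C.ncard = gammaID G :=
  Nat.sInf_mem (s := {n | ∃ C : Set V, IsIdCode G C ∧ C.ncard = n})
    ⟨_, _, isIdCode_univ hG, rfl⟩

theorem traces_eq_image_traces_insert (C : Set V) (w : V) :
    traces G C = (· ∩ C) '' traces G (insert w C) := by
  rw [traces, traces, ← Set.range_comp]
  congr 1
  ext v x
  simp +contextual [Set.mem_inter_iff, Set.mem_insert_iff]

theorem ncard_traces_lt_ncard_traces_insert [Finite V] {C : Set V} {u v w : V}
    (huv : cnbr G u ∩ C = cnbr G v ∩ C) (hwu : w ∈ cnbr G u) (hwv : w ∉ cnbr G v) :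
    (traces G C).ncard < (traces G (insert w C)).ncard := by
  rw [traces_eq_image_traces_insert C w]
  refine Set.ncard_image_lt_of_not_injOn (Set.toFinite _) fun hinj => hwv ?_
  have hC : insert w C ∩ C = C := Set.inter_eq_right.mpr (Set.subset_insert w C)
  have heq := hinj ⟨u, rfl⟩ ⟨v, rfl⟩ (by simpa only [Set.inter_assoc, hC])
  exact (heq.le ⟨hwu, Set.mem_insert w C⟩).1

theorem ncard_traces_lt_of_not_injective [Finite V] {C : Set V}
    (hinj : ¬ Function.Injective fun v => cnbr G v ∩ C) : (traces G C).ncard < Nat.card V := by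
  rw [traces, ← Set.image_univ, ← Set.ncard_univ]
  exact Set.ncard_image_lt_of_not_injOn Set.finite_univ (by rwa [Set.injOn_univ])

theorem exists_ncard_traces_lt_ncard_traces_insert [Finite V] (hG : Identifiable G) {C : Set V}
    (hinj : ¬ Function.Injective fun v => cnbr G v ∩ C) :
    ∃ w, (traces G C).ncard < (traces G (insert w C)).ncard := by
  obtain ⟨u, v, huv, hne⟩ : ∃ u v, cnbr G u ∩ C = cnbr G v ∩ C ∧ u ≠ v := by
    simpa [Function.Injective] using hinj
  by_cases hsub : cnbr G u ⊆ cnbr G v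
  · obtain ⟨w, hwv, hwu⟩ := Set.not_subset.mp fun h => hne (hG u v (hsub.antisymm h))
    exact ⟨w, ncard_traces_lt_ncard_traces_insert huv.symm hwv hwu⟩
  · obtain ⟨w, hwu, hwv⟩ := Set.not_subset.mp hsub
    exact ⟨w, ncard_traces_lt_ncard_traces_insert huv hwu hwv⟩

theorem exists_isIdCode_ncard_le_add [Finite V] (hG : Identifiable G) (k : ℕ) (C : Set V)
    (hdom : ∀ v, (cnbr G v ∩ C).Nonempty) (hk : Nat.card V ≤ k + (traces G C).ncard) :
    ∃ C', IsIdCode G C' ∧ C'.ncard ≤ C.ncard + k := by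
  induction k generalizing C with
  | zero =>
    refine ⟨C, ⟨hdom, ?_⟩, le_rfl⟩
    by_contra hinj
    have := ncard_traces_lt_of_not_injective hinj
    omega
  | succ k ih =>
    by_cases hinj : Function.Injective fun v => cnbr G v ∩ C
    · exact ⟨C, ⟨hdom, hinj⟩, Nat.le_add_right _ _⟩
    obtain ⟨w, hw⟩ := exists_ncard_traces_lt_ncard_traces_insert hG hinj
    have hdom' : ∀ v, (cnbr G v ∩ insert w C).Nonempty := fun v =>
      (hdom v).mono (Set.inter_subset_inter_right _ (Set.subset_insert w C))
    obtain ⟨C', hC', hcard⟩ := ih (insert w C) hdom' (by omega)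
    have := Set.ncard_insert_le w C
    exact ⟨C', hC', by omega⟩

theorem card_le_ncard_add_ncard_traces [Finite V] {C D : Set V} (hC : IsIdCode H C)
    (hD : ∀ v ∉ D, cnbr H v = cnbr G v) : Nat.card V ≤ D.ncard + (traces G C).ncard := by
  have hinj : Set.InjOn (fun v => cnbr G v ∩ C) Dᶜ := fun x hx y hy hxy =>
    hC.2 x y (by simpa only [hD x hx, hD y hy] using hxy)
  have hle : Dᶜ.ncard ≤ (traces G C).ncard :=
    hinj.ncard_image ▸ Set.ncard_le_ncard (Set.image_subset_range _ Dᶜ) (Set.toFinite _)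
  have := Set.ncard_add_ncard_compl D
  omega

theorem gammaID_le_gammaID_add_ncard [Finite V] (hG : Identifiable G) (hH : Identifiable H)
    (hHG : H ≤ G) {D : Set V} (hD : ∀ v ∉ D, cnbr H v = cnbr G v) :
    gammaID G ≤ gammaID H + D.ncard := by
  obtain ⟨C, hC, hCcard⟩ := exists_isIdCode_ncard_eq_gammaID hH
  have hdom : ∀ v, (cnbr G v ∩ C).Nonempty := fun v =>
    (hC.1 v).mono (Set.inter_subset_inter_left C (cnbr_mono hHG v))
  obtain ⟨C', hC', hcard⟩ :=
    exists_isIdCode_ncard_le_add hG D.ncard C hdom (card_le_ncard_add_ncard_traces hC hD)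
  exact (gammaID_le hC').trans (hCcard ▸ hcard)

end IdentifyingCodes

theorem ncard_setOf_exists_mem_le {S : Set (Sym2 V)} (hS : S.Finite) :
    {x : V | ∃ e ∈ S, x ∈ e}.ncard ≤ 2 * S.ncard := by
  classical
  have hsupp : {x : V | ∃ e ∈ S, x ∈ e} = ↑(hS.toFinset.biUnion Sym2.toFinset) := by
    ext x
    simp [Sym2.mem_toFinset]
  rw [hsupp, Set.ncard_coe_finset, Set.ncard_eq_toFinset_card S hS, mul_comm]
  refine Finset.card_biUnion_le_card_mul _ _ _ fun e _ => ?_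
  rw [Sym2.card_toFinset]
  split_ifs <;> norm_num

theorem gammaID_le_gammaID_deleteEdges_add [Finite V] {G : SimpleGraph V} (hG : Identifiable G)
    {S : Set (Sym2 V)} (hS : Identifiable (G.deleteEdges S)) :
    gammaID G ≤ gammaID (G.deleteEdges S) + 2 * S.ncard :=
  (gammaID_le_gammaID_add_ncard hG hS (G.deleteEdges_le S) (D := {x | ∃ e ∈ S, x ∈ e})
    fun _ hv => cnbr_deleteEdges_of_forall_notMem (by simpa using hv)).trans
    (Nat.add_le_add_left (ncard_setOf_exists_mem_le (Set.toFinite S)) _)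

theorem identifiable_of_cliqueFree_three {H : SimpleGraph V} [Finite V] (hc : H.Connected)
    (htf : H.CliqueFree 3) (hn : 3 ≤ Nat.card V) : Identifiable H := by
  classical
  intro a b hab
  by_contra hne
  have hadj : H.Adj a b := by
    have : b ∈ cnbr H a := hab ▸ Set.mem_insert b _
    exact (this.resolve_left (Ne.symm hne) :)
  have hclosed : ∀ x ∈ ({a, b} : Set V), ∀ y ∉ ({a, b} : Set V), ¬ H.Adj x y := by
    intro x hx y hy hxy
    simp only [Set.mem_insert_iff, Set.mem_singleton_iff, not_or] at hx hy
    have hiff : H.Adj a y ↔ H.Adj b y := by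
      simpa [cnbr, hy.1, hy.2] using Set.ext_iff.mp hab y
    rcases hx with rfl | rfl
    · exact htf {x, b, y} (is3Clique_triple_iff.mpr ⟨hadj, hxy, hiff.mp hxy⟩)
    · exact htf {a, x, y} (is3Clique_triple_iff.mpr ⟨hadj, hiff.mpr hxy, hxy⟩)
  obtain ⟨c, -, hc'⟩ := Set.exists_mem_notMem_of_ncard_lt_ncard (s := ({a, b} : Set V))
    (t := Set.univ) (by rw [Set.ncard_univ, Set.ncard_pair hne]; omega)
  obtain ⟨p⟩ := hc.preconnected a c
  obtain ⟨d, -, hd, hd'⟩ := p.exists_boundary_dart _ (Set.mem_insert a _) hc'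
  exact hclosed _ hd _ hd' d.adj

namespace SimpleGraph

theorem exists_adj_adj_of_not_cliqueFree_sup_edge {H : SimpleGraph V} {u v : V}
    (h : H.CliqueFree 3) (h' : ¬ (H ⊔ edge u v).CliqueFree 3) :
    ∃ z, H.Adj u z ∧ H.Adj v z := by
  classical
  have huv : u ≠ v := by
    rintro rfl
    exact h' (by rwa [edge_self_eq_bot, sup_bot_eq])
  obtain ⟨t, ht⟩ : ∃ t, (H ⊔ edge u v).IsNClique 3 t := by simpa [CliqueFree] using h'
  have ht' : (H ⊔ edge v u).IsNClique 3 t := edge_comm u v ▸ ht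
  have hu := h.mem_of_sup_edge_isNClique ht
  have hv := h.mem_of_sup_edge_isNClique ht'
  have htu := ht.erase_of_sup_edge_of_mem hu
  have htv := ht'.erase_of_sup_edge_of_mem hv
  obtain ⟨z, hzu, hzv⟩ := Finset.exists_mem_ne (by rw [htu.card_eq]; norm_num) v
  have hzu' : z ≠ u := Finset.ne_of_mem_erase hzu
  have hzt := Finset.mem_of_mem_erase hzu
  have hu' : u ∈ t.erase v := Finset.mem_erase.mpr ⟨huv, hu⟩
  have hv' : v ∈ t.erase u := Finset.mem_erase.mpr ⟨huv.symm, hv⟩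
  exact ⟨z, htv.1 hu' (Finset.mem_erase.mpr ⟨hzv, hzt⟩) hzu'.symm, htu.1 hv' hzu hzv.symm⟩

theorem deleteEdges_sdiff_singleton_le (G : SimpleGraph V) (S : Set (Sym2 V)) (u v : V) :
    G.deleteEdges (S \ {s(u, v)}) ≤ G.deleteEdges S ⊔ edge u v := by
  intro x y hxy
  rw [deleteEdges_adj] at hxy
  rw [sup_adj, deleteEdges_adj, edge_adj]
  by_cases h : s(x, y) ∈ S
  · have : s(x, y) = s(u, v) := not_not.mp fun hne => hxy.2 ⟨h, hne⟩
    exact Or.inr ⟨Sym2.eq_iff.mp this, hxy.1.ne⟩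
  · exact Or.inl ⟨hxy.1, h⟩

theorem reachable_deleteEdges_of_minimal {G : SimpleGraph V} {S : Set (Sym2 V)}
    (hS : Minimal (fun S => (G.deleteEdges S).CliqueFree 3) S) {u v : V} (huv : G.Adj u v) :
    (G.deleteEdges S).Reachable u v := by
  by_cases he : s(u, v) ∈ S
  · have hcf := hS.not_prop_of_lt (Set.sdiff_singleton_ssubset.mpr he)
    obtain ⟨z, huz, hvz⟩ := exists_adj_adj_of_not_cliqueFree_sup_edge hS.prop
      fun h => hcf (h.anti (G.deleteEdges_sdiff_singleton_le S u v))
    exact huz.reachable.trans hvz.reachable.symm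
  · exact (deleteEdges_adj.mpr ⟨huv, he⟩).reachable

theorem Connected.deleteEdges_of_minimal {G : SimpleGraph V} (hG : G.Connected)
    {S : Set (Sym2 V)} (hS : Minimal (fun S => (G.deleteEdges S).CliqueFree 3) S) :
    (G.deleteEdges S).Connected := by
  have hle : G.Reachable ≤ (G.deleteEdges S).Reachable := by
    rw [reachable_eq_reflTransGen, reachable_eq_reflTransGen]
    exact Relation.reflTransGen_closed fun u v huv =>
      (reachable_iff_reflTransGen u v).mp (reachable_deleteEdges_of_minimal hS huv)
  have := hG.nonempty
  exact ⟨fun u v => hle u v (hG u v)⟩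

end SimpleGraph

end

theorem stmt_18_general {V : Type*} [Fintype V] (G : SimpleGraph V) (Δ t : ℕ)
    (hconn : G.Connected)
    (hident : ∀ a b : V, cnbr G a = cnbr G b → a = b)
    (hn : 3 ≤ Fintype.card V)
    (hdeg : ∀ w : V, (G.neighborSet w).ncard ≤ Δ)
    (E' : Set (Sym2 V)) (ht : E'.ncard = t)
    (htf : (G.deleteEdges E').CliqueFree 3)
    (hyp : ∀ H : SimpleGraph V, H.Connected →
      (∀ a b : V, cnbr H a = cnbr H b → a = b) → H.CliqueFree 3 →
      (∀ w : V, (H.neighborSet w).ncard ≤ Δ) →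
      (gammaID H : ℚ) ≤ ((Δ : ℚ) - 1) / Δ * Fintype.card V + 1 / Δ) :
    (gammaID G : ℚ) ≤ ((Δ : ℚ) - 1) / Δ * Fintype.card V + 4 * t + 1 / Δ := by
  obtain ⟨S, hSE, hS⟩ :=
    exists_minimal_le_of_wellFoundedLT (fun S => (G.deleteEdges S).CliqueFree 3) E' htf
  have hconnS := hconn.deleteEdges_of_minimal hS
  have hidentS :=
    identifiable_of_cliqueFree_three hconnS hS.prop (Nat.card_eq_fintype_card (α := V) ▸ hn)
  have hdegS (w : V) : ((G.deleteEdges S).neighborSet w).ncard ≤ Δ :=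
    (Set.ncard_le_ncard (neighborSet_mono (G.deleteEdges_le S) w)).trans (hdeg w)
  have hγ : gammaID G ≤ gammaID (G.deleteEdges S) + 2 * t := by
    have hdel := gammaID_le_gammaID_deleteEdges_add hident hidentS
    have hSt := Set.ncard_le_ncard hSE
    omega
  have hγS := hyp _ hconnS hidentS hS.prop hdegS
  have hγ' : (gammaID G : ℚ) ≤ gammaID (G.deleteEdges S) + 2 * t := by exact_mod_cast hγ
  have ht0 : (0 : ℚ) ≤ t := t.cast_nonneg
  linarith

theorem stmt_18 {V : Type*} [Fintype V] (G : SimpleGraph V) (Δ t : ℕ)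
    (hconn : G.Connected)
    (hident : ∀ a b : V, cnbr G a = cnbr G b → a = b)
    (hn : 3 ≤ Fintype.card V) (hΔ : 3 ≤ Δ)
    (hdeg : ∀ w : V, (G.neighborSet w).ncard ≤ Δ)
    (E' : Set (Sym2 V)) (hE' : E' ⊆ G.edgeSet) (ht : E'.ncard = t)
    (htf : (G.deleteEdges E').CliqueFree 3)
    (hyp : ∀ H : SimpleGraph V, H.Connected →
      (∀ a b : V, cnbr H a = cnbr H b → a = b) → H.CliqueFree 3 →
      (∀ w : V, (H.neighborSet w).ncard ≤ Δ) →
      (gammaID H : ℚ) ≤ ((Δ : ℚ) - 1) / Δ * Fintype.card V + 1 / Δ) :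
    (gammaID G : ℚ) ≤ ((Δ : ℚ) - 1) / Δ * Fintype.card V + 4 * t + 1 / Δ :=
  stmt_18_general G Δ t hconn hident hn hdeg E' ht htf hyp
end
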